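/- arXiv:math/0609549 — 4 statements merged into one kernel-verified Lean document; each statement's English description precedes it below -/
import Mathlib

section
/- If X₁,…,Xₙ are i.i.d. with distribution P̄ and Q̄ is another probability measure with both P̄, Q̄ dominated by λ, then for all x ∈ ℝ, P[∑_{i=1}^n log((dQ̄/dP̄)(X_i)) ≥ 2x] ≤ exp[n·log ρ(P̄,Q̄) − x] ≤ exp[n·h²(P̄,Q̄) − x], where ρ(P̄,Q̄) = ∫√(dP̄ dQ̄) is the Hellinger affinity and h² = 1 − ρ. -/
open MeasureTheory ProbabilityTheory Real
open scoped ENNReal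

/-! Raising the event to the power `1/2` and applying Markov's inequality to the i.i.d. product
bounds the probability by `(∫ √(q/p) dP)ⁿ · e⁻ˣ`, and `∫ √(q/p) dP = ∫ √(pq) dλ = ρ`, which is at
most `1` by Cauchy–Schwarz. Then `ρⁿ ≤ exp (n log ρ)` and `log ρ ≤ 0 ≤ 1 - ρ`. -/

section

variable {𝒳 : Type*} [MeasurableSpace 𝒳]

noncomputable def hellingerAffinity (P Q lam : Measure 𝒳) : ℝ≥0∞ :=
  ∫⁻ z, P.rnDeriv lam z ^ (1 / 2 : ℝ) * Q.rnDeriv lam z ^ (1 / 2 : ℝ) ∂lam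

theorem lintegral_pi_prod_eq_pow {ι : Type*} [Fintype ι] (μ : Measure 𝒳)
    [IsProbabilityMeasure μ] {g : 𝒳 → ℝ≥0∞} (hg : Measurable g) :
    ∫⁻ y, ∏ i, g (y i) ∂Measure.pi (fun _ : ι => μ) = (∫⁻ z, g z ∂μ) ^ Fintype.card ι := by
  rw [lintegral_prod_eq_prod_lintegral_of_indepFun _ _
    (iIndepFun_pi fun _ => hg.aemeasurable) fun i => hg.comp (measurable_pi_apply i)]
  simp_rw [(measurePreserving_eval (fun _ : ι => μ) _).lintegral_comp hg]
  simp

theorem measure_pi_prod_ge_le_lintegral_rpow_pow_div {ι : Type*} [Fintype ι] (μ : Measure 𝒳)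
    [IsProbabilityMeasure μ] {f : 𝒳 → ℝ≥0∞} (hf : Measurable f) {t : ℝ} (ht : 0 < t)
    {c : ℝ≥0∞} (hc0 : c ≠ 0) (hc : c ≠ ∞) :
    Measure.pi (fun _ : ι => μ) {y | c ≤ ∏ i, f (y i)}
      ≤ (∫⁻ z, f z ^ t ∂μ) ^ Fintype.card ι / c ^ t := by
  have hft : Measurable fun z => f z ^ t := hf.pow_const t
  have hsub : {y : ι → 𝒳 | c ≤ ∏ i, f (y i)} ⊆ {y | c ^ t ≤ ∏ i, f (y i) ^ t} := by
    intro y hy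
    simpa [ENNReal.prod_rpow_of_nonneg ht.le] using ENNReal.rpow_le_rpow hy ht.le
  calc Measure.pi (fun _ : ι => μ) {y | c ≤ ∏ i, f (y i)}
      ≤ Measure.pi (fun _ : ι => μ) {y | c ^ t ≤ ∏ i, f (y i) ^ t} := measure_mono hsub
    _ ≤ (∫⁻ y, ∏ i, f (y i) ^ t ∂Measure.pi fun _ : ι => μ) / c ^ t :=
        meas_ge_le_lintegral_div
          (Finset.measurable_prod _ fun i _ => hft.comp (measurable_pi_apply i)).aemeasurable
          (by simp [ENNReal.rpow_eq_zero_iff, hc0, hc, ht])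
          (ENNReal.rpow_ne_top_of_nonneg ht.le hc)
    _ = (∫⁻ z, f z ^ t ∂μ) ^ Fintype.card ι / c ^ t := by rw [lintegral_pi_prod_eq_pow μ hft]

theorem ENNReal.mul_div_rpow_half {a : ℝ≥0∞} (b : ℝ≥0∞) (ha : a ≠ ∞) :
    a * (b / a) ^ (1 / 2 : ℝ) = a ^ (1 / 2 : ℝ) * b ^ (1 / 2 : ℝ) := by
  rcases eq_or_ne a 0 with rfl | ha0
  · simp
  have hsq : a = a ^ (1 / 2 : ℝ) * a ^ (1 / 2 : ℝ) := by
    rw [← ENNReal.rpow_add _ _ ha0 ha]; norm_num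
  rw [ENNReal.div_rpow_of_nonneg _ _ (by norm_num)]
  nth_rewrite 1 [hsq]
  rw [mul_assoc, ENNReal.mul_div_cancel (by simp [ha0]) (by simp [ha])]

theorem lintegral_rpow_half_rnDeriv_div_eq_hellingerAffinity (P Q lam : Measure 𝒳)
    [SigmaFinite P] [SigmaFinite lam] (hP : P ≪ lam) :
    ∫⁻ z, (Q.rnDeriv lam z / P.rnDeriv lam z) ^ (1 / 2 : ℝ) ∂P = hellingerAffinity P Q lam := by
  rw [← lintegral_rnDeriv_mul hP
    (f := fun z => (Q.rnDeriv lam z / P.rnDeriv lam z) ^ (1 / 2 : ℝ))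
    (((Q.measurable_rnDeriv lam).div (P.measurable_rnDeriv lam)).pow_const _).aemeasurable]
  refine lintegral_congr_ae ?_
  filter_upwards [P.rnDeriv_lt_top lam] with z hz
  exact ENNReal.mul_div_rpow_half _ hz.ne

theorem hellingerAffinity_le_one (P Q lam : Measure 𝒳) [IsProbabilityMeasure P]
    [IsProbabilityMeasure Q] [SigmaFinite lam] (hP : P ≪ lam) (hQ : Q ≪ lam) :
    hellingerAffinity P Q lam ≤ 1 := by
  have hsq : ∀ (μ : Measure 𝒳) [IsProbabilityMeasure μ], μ ≪ lam →
      ∫⁻ z, (μ.rnDeriv lam z ^ (1 / 2 : ℝ)) ^ (2 : ℝ) ∂lam = 1 := by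
    intro μ _ hμ
    simp_rw [← ENNReal.rpow_mul, one_div, inv_mul_cancel₀ (two_ne_zero' ℝ), ENNReal.rpow_one]
    rw [Measure.lintegral_rnDeriv hμ, measure_univ]
  calc hellingerAffinity P Q lam
      ≤ (∫⁻ z, (P.rnDeriv lam z ^ (1 / 2 : ℝ)) ^ (2 : ℝ) ∂lam) ^ (1 / 2 : ℝ)
        * (∫⁻ z, (Q.rnDeriv lam z ^ (1 / 2 : ℝ)) ^ (2 : ℝ) ∂lam) ^ (1 / 2 : ℝ) :=
      ENNReal.lintegral_mul_le_Lp_mul_Lq lam Real.HolderConjugate.two_two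
        ((P.measurable_rnDeriv lam).pow_const _).aemeasurable
        ((Q.measurable_rnDeriv lam).pow_const _).aemeasurable
    _ = 1 := by rw [hsq P hP, hsq Q hQ]; simp

theorem integral_sqrt_rnDeriv_mul_eq_hellingerAffinity_toReal (P Q lam : Measure 𝒳)
    [SigmaFinite P] [SigmaFinite Q] :
    ∫ z, √((P.rnDeriv lam z).toReal * (Q.rnDeriv lam z).toReal) ∂lam
      = (hellingerAffinity P Q lam).toReal := by
  have hp := (P.measurable_rnDeriv lam).pow_const (1 / 2 : ℝ)
  have hq := (Q.measurable_rnDeriv lam).pow_const (1 / 2 : ℝ)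
  rw [hellingerAffinity, ← integral_toReal]
  · refine integral_congr_ae (ae_of_all _ fun z => ?_)
    dsimp only
    rw [ENNReal.toReal_mul, ← ENNReal.toReal_rpow, ← ENNReal.toReal_rpow, ← sqrt_eq_rpow,
      ← sqrt_eq_rpow, sqrt_mul ENNReal.toReal_nonneg]
  · exact (hp.mul hq).aemeasurable
  · filter_upwards [P.rnDeriv_lt_top lam, Q.rnDeriv_lt_top lam] with z hpz hqz
    exact ENNReal.mul_lt_top (ENNReal.rpow_lt_top_of_nonneg (by norm_num) hpz.ne)
      (ENNReal.rpow_lt_top_of_nonneg (by norm_num) hqz.ne)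

end

theorem pow_le_exp_mul_log {r : ℝ} (hr : 0 ≤ r) (n : ℕ) : r ^ n ≤ exp (n * log r) := by
  rcases hr.eq_or_lt with rfl | hr
  · simpa using pow_le_one₀ le_rfl zero_le_one
  · rw [← rpow_natCast, rpow_def_of_pos hr, mul_comm]

theorem ENNReal.pow_div_ofReal_exp_le {a : ℝ≥0∞} (ha : a ≠ ∞) (n : ℕ) (x : ℝ) :
    a ^ n / ENNReal.ofReal (Real.exp x)
      ≤ ENNReal.ofReal (Real.exp (n * Real.log a.toReal - x)) := by
  rw [← ENNReal.ofReal_toReal ha, ← ENNReal.ofReal_pow ENNReal.toReal_nonneg,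
    ← ENNReal.ofReal_div_of_pos (Real.exp_pos x), Real.exp_sub,
    ENNReal.toReal_ofReal ENNReal.toReal_nonneg]
  gcongr
  exact pow_le_exp_mul_log ENNReal.toReal_nonneg n

/-- If `X₁,…,Xₙ` are i.i.d. with distribution `P` and `Q` is another probability
measure, both dominated by a σ-finite `lam`, then for all `x ∈ ℝ`,
`P[∑ log((dQ/dP)(Xᵢ)) ≥ 2x] ≤ exp(n log ρ(P,Q) − x) ≤ exp(n h²(P,Q) − x)`, where
`ρ(P,Q) = ∫ √(dP dQ)` is the Hellinger affinity and `h² = 1 − ρ`. The event is expressed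
multiplicatively in `ℝ≥0∞`, which encodes the convention that the log-likelihood ratio is
`+∞` where `dP/dlam = 0 < dQ/dlam`. -/
theorem stmt_3 {𝒳 : Type*} [MeasurableSpace 𝒳] (P Q lam : Measure 𝒳)
    [IsProbabilityMeasure P] [IsProbabilityMeasure Q] [SigmaFinite lam]
    (hP : P ≪ lam) (hQ : Q ≪ lam) (n : ℕ) (x : ℝ) :
    (Measure.pi (fun _ : Fin n => P))
        {y | ENNReal.ofReal (Real.exp (2 * x))
          ≤ ∏ i : Fin n, (Q.rnDeriv lam (y i) / P.rnDeriv lam (y i))}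
      ≤ ENNReal.ofReal (Real.exp ((n : ℝ) *
          Real.log (∫ z, Real.sqrt ((P.rnDeriv lam z).toReal * (Q.rnDeriv lam z).toReal) ∂lam)
          - x)) ∧
    ENNReal.ofReal (Real.exp ((n : ℝ) *
        Real.log (∫ z, Real.sqrt ((P.rnDeriv lam z).toReal * (Q.rnDeriv lam z).toReal) ∂lam)
        - x))
      ≤ ENNReal.ofReal (Real.exp ((n : ℝ) *
          (1 - ∫ z, Real.sqrt ((P.rnDeriv lam z).toReal * (Q.rnDeriv lam z).toReal) ∂lam)
          - x)) := by
  have hρ1 := hellingerAffinity_le_one P Q lam hP hQ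
  have hρ : (hellingerAffinity P Q lam).toReal ≤ 1 :=
    ENNReal.toReal_le_of_le_ofReal zero_le_one (by simpa using hρ1)
  have hsqrt : ENNReal.ofReal (exp (2 * x)) ^ (1 / 2 : ℝ) = ENNReal.ofReal (exp x) := by
    rw [ENNReal.ofReal_rpow_of_pos (exp_pos _), ← exp_mul]
    ring_nf
  rw [integral_sqrt_rnDeriv_mul_eq_hellingerAffinity_toReal]
  refine ⟨?_, ?_⟩
  · calc _ ≤ (∫⁻ z, (Q.rnDeriv lam z / P.rnDeriv lam z) ^ (1 / 2 : ℝ) ∂P) ^ n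
            / ENNReal.ofReal (exp (2 * x)) ^ (1 / 2 : ℝ) := by
          simpa using measure_pi_prod_ge_le_lintegral_rpow_pow_div (ι := Fin n) P
            ((Q.measurable_rnDeriv lam).div (P.measurable_rnDeriv lam)) one_half_pos
            (by positivity) ENNReal.ofReal_ne_top
      _ ≤ _ := by
          rw [lintegral_rpow_half_rnDeriv_div_eq_hellingerAffinity P Q lam hP, hsqrt]
          exact ENNReal.pow_div_ofReal_exp_le (ne_top_of_le_ne_top ENNReal.one_ne_top hρ1) n x
  · gcongr
    linarith [log_nonpos ENNReal.toReal_nonneg hρ]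
end

section
/- For f, g, f' nonnegative functions in L²(λ) with g ≤ K·f λ-almost everywhere (K > 0), one has ∫ g f^{-1} f'² dλ ≤ K‖f − f'‖₂² + 2⟨g, f'⟩ − ⟨g, f⟩, where ⟨·,·⟩ and ‖·‖₂ denote the L²(λ) scalar product and norm, and g f^{-1} f'² is interpreted as 0 where f = 0 (noting g = 0 there a.e.). -/
open MeasureTheory Real

/-!
Pointwise, `g f⁻¹ f'² = g f⁻¹ (f - f')² + 2 g f' - g f`, and the domination `g ≤ K f` gives
`0 ≤ g f⁻¹ ≤ K`. Wherever `g ≠ 0` it also forces `f > 0`, so the identity survives the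
convention `0⁻¹ = 0`. Integrating the resulting pointwise bound gives the claim, every term being
integrable because `g f⁻¹` is a bounded multiplier and `f, g, f' ∈ L²`.
-/

lemma mul_inv_mul_cancel_of_le_mul {g f K : ℝ} (hg : 0 ≤ g) (hgf : g ≤ K * f) :
    g * f⁻¹ * f = g := by
  rcases eq_or_ne f 0 with rfl | hf
  · simp only [mul_zero] at hgf
    simp [le_antisymm hgf hg]
  · field_simp

lemma mul_inv_mem_Icc_of_le_mul {g f K : ℝ} (hK : 0 ≤ K) (hg : 0 ≤ g) (hgf : g ≤ K * f) :
    g * f⁻¹ ∈ Set.Icc 0 K := by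
  rcases hg.eq_or_lt with rfl | hg
  · simpa using hK
  have hf : 0 < f := pos_of_mul_pos_right (hg.trans_le hgf) hK
  refine ⟨by positivity, ?_⟩
  rw [← div_eq_mul_inv, div_le_iff₀ hf]
  exact hgf

lemma mul_inv_mul_sq_le {g f K y : ℝ} (hK : 0 ≤ K) (hg : 0 ≤ g) (hgf : g ≤ K * f) :
    g * f⁻¹ * y ^ 2 ≤ K * (f - y) ^ 2 + 2 * (g * y) - g * f :=
  calc g * f⁻¹ * y ^ 2 = g * f⁻¹ * (f - y) ^ 2 + 2 * (g * y) - g * f := by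
        linear_combination (2 * y - f) * mul_inv_mul_cancel_of_le_mul hg hgf
    _ ≤ K * (f - y) ^ 2 + 2 * (g * y) - g * f := by
        gcongr
        exact (mul_inv_mem_Icc_of_le_mul hK hg hgf).2

theorem stmt_4_general {X : Type*} [MeasurableSpace X] (lam : Measure X)
    (f g f' : X → ℝ) (K : ℝ) (hK : 0 < K)
    (hf : MemLp f 2 lam) (hg : MemLp g 2 lam) (hf' : MemLp f' 2 lam)
    (hgpos : ∀ x, 0 ≤ g x)
    (hdom : ∀ᵐ x ∂lam, g x ≤ K * f x) :
    ∫ x, g x * (f x)⁻¹ * (f' x) ^ 2 ∂lam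
      ≤ K * ∫ x, (f x - f' x) ^ 2 ∂lam
        + 2 * ∫ x, g x * f' x ∂lam - ∫ x, g x * f x ∂lam := by
  have hratio : ∀ᵐ x ∂lam, ‖g x * (f x)⁻¹‖ ≤ K := hdom.mono fun x hx => by
    obtain ⟨h0, hle⟩ := mul_inv_mem_Icc_of_le_mul hK.le (hgpos x) hx
    exact (norm_of_nonneg h0).trans_le hle
  have hlhs : Integrable (fun x => g x * (f x)⁻¹ * f' x ^ 2) lam :=
    hf'.integrable_sq.bdd_mul
      (hg.aestronglyMeasurable.aemeasurable.mul
        hf.aestronglyMeasurable.aemeasurable.inv).aestronglyMeasurable hratio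
  have hsq : Integrable (fun x => K * (f x - f' x) ^ 2) lam :=
    ((hf.sub hf').integrable_sq).const_mul K
  have hgf' : Integrable (fun x => 2 * (g x * f' x)) lam := (hg.integrable_mul hf').const_mul 2
  have hgf : Integrable (fun x => g x * f x) lam := hg.integrable_mul hf
  have hrhs : Integrable (fun x => K * (f x - f' x) ^ 2 + 2 * (g x * f' x)) lam := hsq.add hgf'
  calc ∫ x, g x * (f x)⁻¹ * f' x ^ 2 ∂lam
      ≤ ∫ x, (K * (f x - f' x) ^ 2 + 2 * (g x * f' x) - g x * f x) ∂lam :=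
        integral_mono_ae hlhs (hrhs.sub hgf)
          (hdom.mono fun x hx => mul_inv_mul_sq_le hK.le (hgpos x) hx)
    _ = _ := by
      rw [integral_sub hrhs hgf, integral_add hsq hgf', integral_const_mul,
        integral_const_mul]

/-- Lemma 8: For nonnegative `f, g, f' ∈ L²(lam)` with `g ≤ K·f` a.e.,
`∫ g f⁻¹ f'² dlam ≤ K‖f − f'‖₂² + 2⟨g, f'⟩ − ⟨g, f⟩`, where `g f⁻¹ f'²` is interpreted as `0`
where `f = 0` (in Lean, `(f x)⁻¹ = 0` when `f x = 0`). -/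
theorem stmt_4 {X : Type*} [MeasurableSpace X] (lam : Measure X) [SigmaFinite lam]
    (f g f' : X → ℝ) (K : ℝ) (hK : 0 < K)
    (hf : MemLp f 2 lam) (hg : MemLp g 2 lam) (hf' : MemLp f' 2 lam)
    (hfpos : ∀ x, 0 ≤ f x) (hgpos : ∀ x, 0 ≤ g x) (hf'pos : ∀ x, 0 ≤ f' x)
    (hdom : ∀ᵐ x ∂lam, g x ≤ K * f x) :
    ∫ x, g x * (f x)⁻¹ * (f' x) ^ 2 ∂lam
      ≤ K * ∫ x, (f x - f' x) ^ 2 ∂lam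
        + 2 * ∫ x, g x * f' x ∂lam - ∫ x, g x * f x ∂lam :=
  stmt_4_general lam f g f' K hK hf hg hf' hgpos hdom
end

section
/- Let f be a function of bounded α-variation on an interval J of finite length L, with 0 < α ≤ 1 and V = V_α(f;J). Then for each j ∈ ℕ there exists a dyadic partition m of J (obtainable by recursive halving) with |m| ≤ c₁(α)·2^j intervals such that the best piecewise-constant L²-approximation of f on m satisfies inf_{t∈S̄_m} ‖f − t‖₂ ≤ c₂(α)·L^{1/2}·V·2^{−jα}, where c₁(α) = (1 − 2^{−[1/(2α)+1]})/(1 − 2^{−1/(2α)}) ∈ (1, 2.21) and c₂(α) = [2^{1+2α}(1 − 2^{−[1/(2α)+1]})^{1−2α}/(1 − 2^{−1/(2α)})]^{1/2} ∈ (√2, 6.51). -/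
open Real MeasureTheory

/-- The set of sums `∑ |f(x_{k+1}) − f(x_k)|^r` over finite increasing sequences in `I`. -/
def varSums (r : ℝ) (f : ℝ → ℝ) (I : Set ℝ) : Set ℝ :=
  {v | ∃ (i : ℕ) (x : ℕ → ℝ), (∀ k, k ≤ i → x k ∈ I) ∧ (∀ k, k < i → x k < x (k + 1)) ∧
    v = ∑ k ∈ Finset.range i, |f (x (k + 1)) - f (x k)| ^ r}

/-- The `α`-variation `V_α(f; I) = (sup ∑ |f(x_j) − f(x_{j−1})|^{1/α})^α`. -/
noncomputable def alphaVar (α : ℝ) (f : ℝ → ℝ) (I : Set ℝ) : ℝ :=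
  (sSup (varSums (1 / α) f I)) ^ α

/-- The dyadic partition of `[a,b)` associated to a complete binary tree, by recursive
halving. -/
noncomputable def dyadicParts : BinaryTree Unit → ℝ → ℝ → List (ℝ × ℝ)
  | BinaryTree.nil, a, b => [(a, b)]
  | BinaryTree.node _ l r, a, b => dyadicParts l a ((a + b) / 2) ++ dyadicParts r ((a + b) / 2) b

/-!
Let `W(I)` be the supremum of the `1/α`-variation sums of `f` over `I`, so that `V = W([c,d))^α`.
It is superadditive, and the oscillation of `f` on `I` is at most `W(I)^α`, so replacing `f` by its
value at the left endpoint of `I` costs at most `|I| W(I)^{2α}` in squared `L²` norm.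

Halve `[c, d)` uniformly down to depth `j`, and then keep halving a piece of depth `k` as long as
its `W` exceeds `s_k = 2 X x^j / (2^j x^{k+1})`, where `X = W([c,d))` and `x = 2^{-1/(2α)}`.
The number of pieces and the squared error are both bounded by potentials `P_k + R_k W(I)` that,
by superadditivity, do not increase when a piece is split; `R_k` collects the geometric series
`∑ 1/s_i`. On a leaf, `w^{2α} ≤ max(0, 1 - 2α) s^{2α} + s^{2α-1} w` for `w ≤ s`, and since
`x^{2α} = 1/2` the quantity `|I| s_k^{2α}` does not depend on `k`. Evaluating the potentials at
the root gives `c₁ 2^j` pieces and squared error `c₂² L V² 2^{-2jα}`.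
-/

namespace DyadicApprox

open Set

section Variation

variable {r : ℝ} {f : ℝ → ℝ} {I : Set ℝ}

lemma zero_mem_varSums {y : ℝ} (hy : y ∈ I) : (0 : ℝ) ∈ varSums r f I :=
  ⟨0, fun _ => y, fun _ _ => hy, fun _ hk => absurd hk (Nat.not_lt_zero _), by simp⟩

lemma varSums_mono {J : Set ℝ} (h : I ⊆ J) : varSums r f I ⊆ varSums r f J := by
  rintro v ⟨i, x, hx, hmono, rfl⟩
  exact ⟨i, x, fun k hk => h (hx k hk), hmono, rfl⟩

lemma abs_sub_rpow_mem_varSums {x y : ℝ} (hx : x ∈ I) (hy : y ∈ I) (hxy : x < y) :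
    |f y - f x| ^ r ∈ varSums r f I := by
  refine ⟨1, fun k => if k = 0 then x else y, fun k _ => ?_, fun k hk => ?_, by simp⟩
  · by_cases h : k = 0 <;> simp [h, hx, hy]
  · obtain rfl : k = 0 := by omega
    simpa using hxy

/-- Concatenating a chain in `[a, m)` with a chain in `[m, b)` adds one nonnegative bridge term. -/
lemma exists_add_le_of_mem_varSums {a m b u v : ℝ} (hu : u ∈ varSums r f (Ico a m))
    (hv : v ∈ varSums r f (Ico m b)) : ∃ s ∈ varSums r f (Ico a b), u + v ≤ s := by
  obtain ⟨i, x, hxI, hx, rfl⟩ := hu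
  obtain ⟨i', y, hyI, hy, rfl⟩ := hv
  have ham : a ≤ m := (hxI 0 (Nat.zero_le _)).1.trans (hxI 0 (Nat.zero_le _)).2.le
  have hmb : m ≤ b := (hyI 0 (Nat.zero_le _)).1.trans (hyI 0 (Nat.zero_le _)).2.le
  let z : ℕ → ℝ := fun k => if k ≤ i then x k else y (k - (i + 1))
  have hz_left : ∀ k ≤ i, z k = x k := fun k hk => if_pos hk
  have hz_right : ∀ k, z (i + 1 + k) = y k := fun k => by
    simp only [z, if_neg (by omega : ¬ i + 1 + k ≤ i), Nat.add_sub_cancel_left]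
  refine ⟨∑ k ∈ Finset.range (i + 1 + i'), |f (z (k + 1)) - f (z k)| ^ r,
    ⟨i + 1 + i', z, fun k hk => ?_, fun k hk => ?_, rfl⟩, ?_⟩
  · by_cases h : k ≤ i
    · exact hz_left k h ▸ Ico_subset_Ico_right hmb (hxI k h)
    · obtain ⟨l, rfl⟩ : ∃ l, k = i + 1 + l := ⟨k - (i + 1), by omega⟩
      exact hz_right l ▸ Ico_subset_Ico_left ham (hyI l (by omega))
  · rcases lt_trichotomy k i with h | rfl | h
    · rw [hz_left k h.le, hz_left (k + 1) h]
      exact hx k h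
    · rw [hz_left k le_rfl, ← add_zero (k + 1), hz_right]
      exact (hxI k le_rfl).2.trans_le (hyI 0 (Nat.zero_le _)).1
    · obtain ⟨l, rfl⟩ : ∃ l, k = i + 1 + l := ⟨k - (i + 1), by omega⟩
      rw [hz_right, add_assoc, hz_right]
      exact hy l (by omega)
  · rw [Finset.sum_range_add, Finset.sum_range_succ]
    have hleft : ∑ k ∈ Finset.range i, |f (z (k + 1)) - f (z k)| ^ r
        = ∑ k ∈ Finset.range i, |f (x (k + 1)) - f (x k)| ^ r :=
      Finset.sum_congr rfl fun k hk => by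
        rw [hz_left k (Finset.mem_range.1 hk).le, hz_left (k + 1) (Finset.mem_range.1 hk)]
    have hright : ∑ k ∈ Finset.range i', |f (z (i + 1 + k + 1)) - f (z (i + 1 + k))| ^ r
        = ∑ k ∈ Finset.range i', |f (y (k + 1)) - f (y k)| ^ r :=
      Finset.sum_congr rfl fun k _ => by rw [add_assoc, hz_right, hz_right]
    rw [hleft, hright]
    linarith [Real.rpow_nonneg (abs_nonneg (f (z (i + 1)) - f (z i))) r]

/-- `alphaVar α f (Ico a b) = varSup (1 / α) f a b ^ α`. -/
noncomputable def varSup (r : ℝ) (f : ℝ → ℝ) (a b : ℝ) : ℝ :=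
  sSup (varSums r f (Ico a b))

variable {a b a' b' : ℝ}

lemma varSup_nonneg (hab : a < b) (hbdd : BddAbove (varSums r f (Ico a b))) :
    0 ≤ varSup r f a b :=
  le_csSup hbdd (zero_mem_varSums (left_mem_Ico.2 hab))

lemma varSup_mono (ha : a' ≤ a) (hb : b ≤ b') (hab : a < b)
    (hbdd : BddAbove (varSums r f (Ico a' b'))) : varSup r f a b ≤ varSup r f a' b' :=
  csSup_le_csSup hbdd ⟨0, zero_mem_varSums (left_mem_Ico.2 hab)⟩
    (varSums_mono (Ico_subset_Ico ha hb))

lemma varSup_add_le {m : ℝ} (ham : a < m) (hmb : m < b)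
    (hbdd : BddAbove (varSums r f (Ico a b))) :
    varSup r f a m + varSup r f m b ≤ varSup r f a b := by
  have hsum : ∀ u ∈ varSums r f (Ico a m), ∀ v ∈ varSums r f (Ico m b),
      u + v ≤ varSup r f a b := fun u hu v hv => by
    obtain ⟨s, hs, hle⟩ := exists_add_le_of_mem_varSums hu hv
    exact hle.trans (le_csSup hbdd hs)
  have hu : varSup r f a m ≤ varSup r f a b - varSup r f m b :=
    csSup_le ⟨0, zero_mem_varSums (left_mem_Ico.2 ham)⟩ fun u hu =>
      le_sub_comm.1 <| csSup_le ⟨0, zero_mem_varSums (left_mem_Ico.2 hmb)⟩ fun v hv =>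
        le_sub_iff_add_le'.2 (hsum u hu v hv)
  linarith

lemma abs_sub_le_varSup_rpow {α x y : ℝ} (hα : 0 < α)
    (hbdd : BddAbove (varSums (1 / α) f (Ico a b))) (hx : x ∈ Ico a b) (hy : y ∈ Ico a b) :
    |f y - f x| ≤ varSup (1 / α) f a b ^ α := by
  have key : ∀ {u v}, u ∈ Ico a b → v ∈ Ico a b → u < v →
      |f v - f u| ≤ varSup (1 / α) f a b ^ α := fun hu hv huv => by
    calc |f _ - f _| = (|f _ - f _| ^ (1 / α)) ^ α := by
          rw [← Real.rpow_mul (abs_nonneg _), one_div_mul_cancel hα.ne', Real.rpow_one]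
      _ ≤ varSup (1 / α) f a b ^ α := Real.rpow_le_rpow (by positivity)
          (le_csSup hbdd (abs_sub_rpow_mem_varSums hu hv huv)) hα.le
  rcases lt_trichotomy x y with h | rfl | h
  · exact key hx hy h
  · simpa using Real.rpow_nonneg (varSup_nonneg (hx.1.trans_lt hx.2) hbdd) α
  · exact abs_sub_comm (f y) (f x) ▸ key hy hx h

end Variation

section DyadicStep

variable {f : ℝ → ℝ}

noncomputable def dyadicStep (f : ℝ → ℝ) : BinaryTree Unit → ℝ → ℝ → ℝ → ℝ
  | .nil, a, _, _ => f a
  | .node _ l r, a, b, y =>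
      if y < (a + b) / 2 then dyadicStep f l a ((a + b) / 2) y
      else dyadicStep f r ((a + b) / 2) b y

lemma bounds_of_mem_dyadicParts {t : BinaryTree Unit} :
    ∀ {a b : ℝ}, a ≤ b → ∀ pq ∈ dyadicParts t a b,
      a ≤ pq.1 ∧ pq.1 ≤ pq.2 ∧ pq.2 ≤ b := by
  induction t with
  | nil =>
    intro a b hab pq hpq
    obtain rfl : pq = (a, b) := List.mem_singleton.1 hpq
    exact ⟨le_rfl, hab, le_rfl⟩
  | node _ l r ihl ihr =>
    intro a b hab pq hpq
    rcases List.mem_append.1 hpq with h | h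
    · obtain ⟨h₁, h₂, h₃⟩ := ihl (by linarith) pq h
      exact ⟨h₁, h₂, by linarith⟩
    · obtain ⟨h₁, h₂, h₃⟩ := ihr (by linarith) pq h
      exact ⟨by linarith, h₂, h₃⟩

lemma dyadicStep_eq_of_mem {t : BinaryTree Unit} :
    ∀ {a b : ℝ}, a ≤ b → ∀ pq ∈ dyadicParts t a b, ∀ y ∈ Ico pq.1 pq.2,
      dyadicStep f t a b y = f pq.1 := by
  induction t with
  | nil =>
    intro a b _ pq hpq y _
    obtain rfl : pq = (a, b) := List.mem_singleton.1 hpq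
    rfl
  | node _ l r ihl ihr =>
    intro a b hab pq hpq y hy
    rcases List.mem_append.1 hpq with h | h
    · have hym : y < (a + b) / 2 :=
        hy.2.trans_le (bounds_of_mem_dyadicParts (by linarith) pq h).2.2
      simpa only [dyadicStep, if_pos hym] using ihl (by linarith) pq h y hy
    · have hym : ¬ y < (a + b) / 2 :=
        not_lt.2 ((bounds_of_mem_dyadicParts (by linarith) pq h).1.trans hy.1)
      simpa only [dyadicStep, if_neg hym] using ihr (by linarith) pq h y hy

variable {α a b : ℝ}

lemma sq_sub_le_varSup_rpow (hα : 0 < α) (hbdd : BddAbove (varSums (1 / α) f (Ico a b)))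
    {y : ℝ} (hy : y ∈ Ico a b) : (f y - f a) ^ 2 ≤ varSup (1 / α) f a b ^ (2 * α) := by
  have hV := varSup_nonneg (hy.1.trans_lt hy.2) hbdd
  calc (f y - f a) ^ 2 = |f y - f a| ^ 2 := (sq_abs _).symm
    _ ≤ (varSup (1 / α) f a b ^ α) ^ 2 := pow_le_pow_left₀ (abs_nonneg _)
        (abs_sub_le_varSup_rpow hα hbdd (left_mem_Ico.2 (hy.1.trans_lt hy.2)) hy) 2
    _ = varSup (1 / α) f a b ^ (2 * α) := by
        rw [← Real.rpow_mul_natCast hV, mul_comm]; norm_num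

lemma integrableOn_sq_sub_left (hα : 0 < α) (hf : Measurable f)
    (hbdd : BddAbove (varSums (1 / α) f (Ico a b))) :
    IntegrableOn (fun y => (f y - f a) ^ 2) (Ico a b) :=
  Measure.integrableOn_of_bounded (M := varSup (1 / α) f a b ^ (2 * α)) (by simp)
    ((hf.sub measurable_const).pow_const 2).aestronglyMeasurable
    ((ae_restrict_mem measurableSet_Ico).mono fun y hy =>
      (Real.norm_of_nonneg (sq_nonneg _)).trans_le (sq_sub_le_varSup_rpow hα hbdd hy))

lemma setIntegral_sq_sub_left_le (hα : 0 < α) (hf : Measurable f) (hab : a ≤ b)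
    (hbdd : BddAbove (varSums (1 / α) f (Ico a b))) :
    ∫ y in Ico a b, (f y - f a) ^ 2 ≤ (b - a) * varSup (1 / α) f a b ^ (2 * α) := by
  calc ∫ y in Ico a b, (f y - f a) ^ 2 ≤ ∫ _ in Ico a b, varSup (1 / α) f a b ^ (2 * α) :=
        setIntegral_mono_on (integrableOn_sq_sub_left hα hf hbdd) (integrableOn_const (by simp))
          measurableSet_Ico fun y hy => sq_sub_le_varSup_rpow hα hbdd hy
    _ = (b - a) * varSup (1 / α) f a b ^ (2 * α) := by
        simp [Real.volume_real_Ico_of_le hab]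

lemma dyadicStep_node_eqOn_left (l r : BinaryTree Unit) :
    EqOn (dyadicStep f (.node () l r) a b) (dyadicStep f l a ((a + b) / 2)) (Ico a ((a + b) / 2)) :=
  fun _ hy => if_pos hy.2

lemma dyadicStep_node_eqOn_right (l r : BinaryTree Unit) :
    EqOn (dyadicStep f (.node () l r) a b) (dyadicStep f r ((a + b) / 2) b) (Ico ((a + b) / 2) b) :=
  fun _ hy => if_neg (not_lt.2 hy.1)

lemma integrableOn_sq_sub_dyadicStep (hα : 0 < α) (hf : Measurable f) (t : BinaryTree Unit) :
    ∀ {a b : ℝ}, BddAbove (varSums (1 / α) f (Ico a b)) →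
      IntegrableOn (fun y => (f y - dyadicStep f t a b y) ^ 2) (Ico a b) := by
  induction t with
  | nil => exact fun hbdd => integrableOn_sq_sub_left hα hf hbdd
  | node _ l r ihl ihr =>
    intro a b hbdd
    rcases lt_or_ge b a with hba | hab
    · simp [Ico_eq_empty_of_le hba.le]
    have hl : IntegrableOn (fun y => (f y - dyadicStep f (.node () l r) a b y) ^ 2)
        (Ico a ((a + b) / 2)) :=
      (ihl (hbdd.mono (varSums_mono (Ico_subset_Ico_right (by linarith))))).congr_fun
        (fun y hy => by simp only [dyadicStep_node_eqOn_left l r hy]) measurableSet_Ico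
    have hr : IntegrableOn (fun y => (f y - dyadicStep f (.node () l r) a b y) ^ 2)
        (Ico ((a + b) / 2) b) :=
      (ihr (hbdd.mono (varSums_mono (Ico_subset_Ico_left (by linarith))))).congr_fun
        (fun y hy => by simp only [dyadicStep_node_eqOn_right l r hy]) measurableSet_Ico
    rw [← Ico_union_Ico_eq_Ico (by linarith : a ≤ (a + b) / 2) (by linarith)]
    exact hl.union hr

lemma setIntegral_sq_sub_dyadicStep_node (hα : 0 < α) (hf : Measurable f) (hab : a ≤ b)
    (hbdd : BddAbove (varSums (1 / α) f (Ico a b))) (l r : BinaryTree Unit) :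
    ∫ y in Ico a b, (f y - dyadicStep f (.node () l r) a b y) ^ 2
      = (∫ y in Ico a ((a + b) / 2), (f y - dyadicStep f l a ((a + b) / 2) y) ^ 2)
        + ∫ y in Ico ((a + b) / 2) b, (f y - dyadicStep f r ((a + b) / 2) b y) ^ 2 := by
  have hint := integrableOn_sq_sub_dyadicStep hα hf (.node () l r) hbdd
  have hl : ∫ y in Ico a ((a + b) / 2), (f y - dyadicStep f (.node () l r) a b y) ^ 2
      = ∫ y in Ico a ((a + b) / 2), (f y - dyadicStep f l a ((a + b) / 2) y) ^ 2 :=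
    setIntegral_congr_fun measurableSet_Ico fun y hy => by
      simp only [dyadicStep_node_eqOn_left l r hy]
  have hr : ∫ y in Ico ((a + b) / 2) b, (f y - dyadicStep f (.node () l r) a b y) ^ 2
      = ∫ y in Ico ((a + b) / 2) b, (f y - dyadicStep f r ((a + b) / 2) b y) ^ 2 :=
    setIntegral_congr_fun measurableSet_Ico fun y hy => by
      simp only [dyadicStep_node_eqOn_right l r hy]
  rw [← hl, ← hr, ← setIntegral_union Ico_disjoint_Ico_same measurableSet_Ico
      (hint.mono_set (Ico_subset_Ico_right (by linarith)))
      (hint.mono_set (Ico_subset_Ico_left (by linarith))),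
    Ico_union_Ico_eq_Ico (by linarith) (by linarith)]

end DyadicStep

section AdaptiveTree

def IsDyadicPiece (c d : ℝ) (k : ℕ) (a b : ℝ) : Prop :=
  c ≤ a ∧ b ≤ d ∧ b - a = (d - c) / 2 ^ k

variable {c d a b : ℝ} {k : ℕ}

lemma isDyadicPiece_zero : IsDyadicPiece c d 0 c d := ⟨le_rfl, le_rfl, by simp⟩

lemma IsDyadicPiece.lt (h : IsDyadicPiece c d k a b) (hcd : c < d) : a < b := by
  have : 0 < (d - c) / 2 ^ k := by have := sub_pos.2 hcd; positivity
  linarith [h.2.2]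

lemma IsDyadicPiece.left (h : IsDyadicPiece c d k a b) (hcd : c < d) :
    IsDyadicPiece c d (k + 1) a ((a + b) / 2) := by
  have := h.lt hcd
  refine ⟨h.1, by linarith [h.2.1], ?_⟩
  rw [pow_succ, ← div_div, ← h.2.2]; ring

lemma IsDyadicPiece.right (h : IsDyadicPiece c d k a b) (hcd : c < d) :
    IsDyadicPiece c d (k + 1) ((a + b) / 2) b := by
  have := h.lt hcd
  refine ⟨by linarith [h.1], h.2.1, ?_⟩
  rw [pow_succ, ← div_div, ← h.2.2]; ring

variable (W : ℝ → ℝ → ℝ) (w : ℕ → ℝ)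

/-- `n` bounds the number of further levels and `k` is the depth of `[a, b)`. -/
noncomputable def adaptiveTree : ℕ → ℕ → ℝ → ℝ → BinaryTree Unit
  | 0, _, _, _ => .nil
  | n + 1, k, a, b =>
    if w k < W a b then
      .node () (adaptiveTree n (k + 1) a ((a + b) / 2)) (adaptiveTree n (k + 1) ((a + b) / 2) b)
    else .nil

variable {W w}

theorem le_potential_of_adaptiveTree (Q : BinaryTree Unit → ℝ → ℝ → ℝ)
    (P R : ℕ → ℝ) (N : ℕ) (hcd : c < d)
    (hW_add : ∀ k a b, IsDyadicPiece c d k a b →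
      W a ((a + b) / 2) + W ((a + b) / 2) b ≤ W a b)
    (hW_deep : ∀ a b, IsDyadicPiece c d N a b → W a b ≤ w N)
    (hR : ∀ k, 0 ≤ R k)
    (hQ_node : ∀ k a b l r, IsDyadicPiece c d k a b →
      Q (.node () l r) a b = Q l a ((a + b) / 2) + Q r ((a + b) / 2) b)
    (hQ_leaf : ∀ k a b, IsDyadicPiece c d k a b → W a b ≤ w k →
      Q .nil a b ≤ P k + R k * W a b)
    (hsplit : ∀ k < N, ∀ v, w k < v → 2 * P (k + 1) + R (k + 1) * v ≤ P k + R k * v) :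
    ∀ n k a b, n + k = N → IsDyadicPiece c d k a b →
      Q (adaptiveTree W w n k a b) a b ≤ P k + R k * W a b := by
  intro n
  induction n with
  | zero =>
    intro k a b hk hab
    obtain rfl : k = N := by omega
    exact hQ_leaf k a b hab (hW_deep a b hab)
  | succ n ih =>
    intro k a b hk hab
    by_cases hw : w k < W a b
    · rw [adaptiveTree, if_pos hw, hQ_node k a b _ _ hab]
      have hl := ih (k + 1) _ _ (by omega) (hab.left hcd)
      have hr := ih (k + 1) _ _ (by omega) (hab.right hcd)
      have hW := mul_le_mul_of_nonneg_left (hW_add k a b hab) (hR (k + 1))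
      linarith [hsplit k (by omega) _ hw]
    · rw [adaptiveTree, if_neg hw]
      exact hQ_leaf k a b hab (not_lt.1 hw)

end AdaptiveTree

section Potential

variable {X x μ ν : ℝ} {j k : ℕ}

noncomputable def threshold (X x : ℝ) (j k : ℕ) : ℝ := 2 * X * x ^ j / (2 ^ j * x ^ (k + 1))

/-- Below depth `j` the cutoff is negative, so the first `j` levels are always split. -/
noncomputable def cutoff (X x : ℝ) (j k : ℕ) : ℝ := if k < j then -1 else threshold X x j k

noncomputable def invThresholdSum (X x : ℝ) (j k : ℕ) : ℝ :=
  ∑ i ∈ Finset.Ico (max k j) (3 * j + 1), (threshold X x j i)⁻¹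

/-- On a piece of depth `k` with variation `W`, the potential
`potentialConst μ j k + potentialSlope μ ν X x j k * W` bounds the number of leaves for
`(μ, ν) = (1, 0)` and the squared error for `(μ, ν) = (max 0 (1 - 2α) E, E)`,
where `E = leafEnergy α L X x j`. -/
noncomputable def potentialConst (μ : ℝ) (j k : ℕ) : ℝ := μ * 2 ^ (j - k)

noncomputable def potentialSlope (μ ν X x : ℝ) (j k : ℕ) : ℝ :=
  ν / threshold X x j (max k j) + μ * invThresholdSum X x j k

lemma threshold_pos (hX : 0 < X) (hx : 0 < x) : 0 < threshold X x j k := by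
  unfold threshold; positivity

lemma threshold_succ (hx : x ≠ 0) : threshold X x j (k + 1) = threshold X x j k / x := by
  unfold threshold; field_simp; ring

lemma threshold_le_succ (hX : 0 < X) (hx : 0 < x) (hx1 : x ≤ 1) :
    threshold X x j k ≤ threshold X x j (k + 1) := by
  rw [threshold_succ hx.ne']
  exact le_div_self (threshold_pos hX hx).le hx hx1

lemma div_threshold (hX : X ≠ 0) (hx : x ≠ 0) :
    X / threshold X x j k = 2 ^ j * x / (2 * x ^ j) * x ^ k := by
  unfold threshold; field_simp; ring

lemma invThresholdSum_nonneg (hX : 0 < X) (hx : 0 < x) : 0 ≤ invThresholdSum X x j k :=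
  Finset.sum_nonneg fun _ _ => inv_nonneg.2 (threshold_pos hX hx).le

lemma invThresholdSum_succ_of_lt (h : k < j) :
    invThresholdSum X x j (k + 1) = invThresholdSum X x j k := by
  unfold invThresholdSum
  rw [max_eq_right (by omega : k + 1 ≤ j), max_eq_right h.le]

lemma invThresholdSum_eq_inv_add (h₁ : j ≤ k) (h₂ : k < 3 * j + 1) :
    invThresholdSum X x j k = (threshold X x j k)⁻¹ + invThresholdSum X x j (k + 1) := by
  unfold invThresholdSum
  rw [max_eq_left h₁, max_eq_left (by omega : j ≤ k + 1), Finset.sum_eq_sum_Ico_succ_bot h₂]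

lemma mul_invThresholdSum_zero_le (hX : 0 < X) (hx : 0 < x) (hx1 : x < 1) :
    X * invThresholdSum X x j 0 ≤ 2 ^ j * (x / 2 / (1 - x)) := by
  have hx' : 0 < 1 - x := sub_pos.2 hx1
  calc X * invThresholdSum X x j 0
      = 2 ^ j * x / (2 * x ^ j) * ∑ i ∈ Finset.Ico j (3 * j + 1), x ^ i := by
        simp only [invThresholdSum, Nat.zero_max, Finset.mul_sum, ← div_eq_mul_inv,
          div_threshold hX.ne' hx.ne']
    _ ≤ 2 ^ j * x / (2 * x ^ j) * (x ^ j / (1 - x)) :=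
        mul_le_mul_of_nonneg_left (geom_sum_Ico_le_of_lt_one hx.le hx1) (by positivity)
    _ = 2 ^ j * (x / 2 / (1 - x)) := by field_simp

lemma potentialSlope_nonneg (hμ : 0 ≤ μ) (hν : 0 ≤ ν) (hX : 0 < X) (hx : 0 < x) :
    0 ≤ potentialSlope μ ν X x j k :=
  add_nonneg (div_nonneg hν (threshold_pos hX hx).le)
    (mul_nonneg hμ (invThresholdSum_nonneg hX hx))

lemma potential_split_le (hμ : 0 ≤ μ) (hν : 0 ≤ ν) (hX : 0 < X) (hx : 0 < x) (hx1 : x ≤ 1)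
    (hk : k < 3 * j + 1) {v : ℝ} (hv : cutoff X x j k < v) :
    2 * potentialConst μ j (k + 1) + potentialSlope μ ν X x j (k + 1) * v
      ≤ potentialConst μ j k + potentialSlope μ ν X x j k * v := by
  unfold potentialConst potentialSlope
  rcases lt_or_ge k j with hkj | hjk
  · rw [max_eq_right (by omega : k + 1 ≤ j), max_eq_right hkj.le,
      invThresholdSum_succ_of_lt hkj, show j - k = j - (k + 1) + 1 by omega, pow_succ]
    linarith
  · rw [cutoff, if_neg (not_lt.2 hjk)] at hv
    have hs := threshold_pos (j := j) (k := k) hX hx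
    have hv0 : 0 < v := hs.trans hv
    have hone : 1 ≤ v / threshold X x j k := (one_le_div hs).2 hv.le
    have hmono : ν / threshold X x j (k + 1) ≤ ν / threshold X x j k :=
      div_le_div_of_nonneg_left hν hs (threshold_le_succ hX hx hx1)
    rw [max_eq_left (by omega : j ≤ k + 1), max_eq_left hjk, invThresholdSum_eq_inv_add hjk hk,
      show j - (k + 1) = 0 by omega, show j - k = 0 by omega]
    have h₁ : μ ≤ μ * (v / threshold X x j k) := le_mul_of_one_le_right hμ hone
    have h₂ := mul_le_mul_of_nonneg_right hmono hv0.le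
    have h₃ : μ * (v / threshold X x j k) = μ * (threshold X x j k)⁻¹ * v := by ring
    nlinarith

lemma potential_zero_le (hμ : 0 ≤ μ) (hX : 0 < X) (hx : 0 < x) (hx1 : x < 1) :
    potentialConst μ j 0 + potentialSlope μ ν X x j 0 * X
      ≤ 2 ^ j * (μ * ((1 - x / 2) / (1 - x)) + ν * (x / 2)) := by
  have hS := mul_le_mul_of_nonneg_left (mul_invThresholdSum_zero_le (j := j) hX hx hx1) hμ
  have hνs : ν / threshold X x j j * X = ν * (2 ^ j * (x / 2)) := by
    rw [mul_comm_div, div_threshold hX.ne' hx.ne']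
    field_simp
  have hx' : (1 - x / 2) / (1 - x) = 1 + x / 2 / (1 - x) := by
    field_simp [(sub_pos.2 hx1).ne']; ring
  simp only [potentialConst, potentialSlope, Nat.zero_max, Nat.sub_zero, add_mul, hνs, hx']
  nlinarith

lemma le_threshold_deep (hX : 0 ≤ X) (hx : 0 < x) (hx2 : x ^ 2 ≤ 1 / 2) :
    X ≤ threshold X x j (3 * j + 1) := by
  have hpow : 2 ^ j * x ^ (2 * j + 2) ≤ 1 / 2 := by
    calc 2 ^ j * x ^ (2 * j + 2) = 2 ^ j * (x ^ 2) ^ (j + 1) := by ring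
      _ ≤ 2 ^ j * (1 / 2) ^ (j + 1) := by gcongr
      _ = 1 / 2 := by rw [pow_succ, ← mul_assoc, ← mul_pow]; norm_num
  have hden : 0 < 2 ^ j * x ^ (2 * j + 2) := by positivity
  calc X ≤ 2 * X / (2 ^ j * x ^ (2 * j + 2)) := by
        rw [le_div_iff₀ hden]; nlinarith
    _ = threshold X x j (3 * j + 1) := by
        unfold threshold; field_simp; ring

end Potential

section LeafError

variable {X x : ℝ} {j : ℕ}

noncomputable def leafEnergy (α L X x : ℝ) (j : ℕ) : ℝ := L * threshold X x j 0 ^ (2 * α)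

lemma rpow_le_max_one_sub_add {p y : ℝ} (hp : 0 ≤ p) (hy0 : 0 ≤ y) (hy1 : y ≤ 1) :
    y ^ p ≤ max 0 (1 - p) + y := by
  rcases le_or_gt 1 p with hp1 | hp1
  · linarith [Real.rpow_le_self_of_le_one hy0 hy1 hp1, le_max_left 0 (1 - p)]
  · have := rpow_one_add_le_one_add_mul_self (s := y - 1) (by linarith) hp hp1.le
    rw [add_sub_cancel] at this
    nlinarith [le_max_right 0 (1 - p)]

lemma div_two_pow_mul_threshold_rpow (hX : 0 < X) (hx : 0 < x) {p : ℝ} (hp : x ^ p = 1 / 2)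
    (L : ℝ) (k : ℕ) : L / 2 ^ k * threshold X x j k ^ p = L * threshold X x j 0 ^ p := by
  induction k with
  | zero => simp
  | succ k ih =>
    rw [threshold_succ hx.ne', Real.div_rpow (threshold_pos hX hx).le hx.le, hp, ← ih, pow_succ]
    field_simp

lemma leaf_error_le_potential {α L v : ℝ} (hα : 0 < α) (hL : 0 ≤ L) (hX : 0 < X) (hx : 0 < x)
    (hxα : x ^ (2 * α) = 1 / 2) {k : ℕ} (hjk : j ≤ k) (hv0 : 0 ≤ v)
    (hv : v ≤ threshold X x j k) :
    L / 2 ^ k * v ^ (2 * α) ≤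
      potentialConst (max 0 (1 - 2 * α) * leafEnergy α L X x j) j k
        + potentialSlope (max 0 (1 - 2 * α) * leafEnergy α L X x j)
            (leafEnergy α L X x j) X x j k * v := by
  set s := threshold X x j k
  set E := leafEnergy α L X x j
  have hs : 0 < s := threshold_pos hX hx
  have hE : E = L / 2 ^ k * s ^ (2 * α) := (div_two_pow_mul_threshold_rpow hX hx hxα L k).symm
  have hE0 : 0 ≤ E := by rw [hE]; positivity
  have hy := rpow_le_max_one_sub_add (p := 2 * α) (by positivity) (div_nonneg hv0 hs.le)
    ((div_le_one hs).2 hv)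
  have hvs : v ^ (2 * α) = s ^ (2 * α) * (v / s) ^ (2 * α) := by
    rw [← Real.mul_rpow hs.le (div_nonneg hv0 hs.le), mul_div_cancel₀ _ hs.ne']
  have hS : 0 ≤ max 0 (1 - 2 * α) * E * invThresholdSum X x j k * v :=
    mul_nonneg (mul_nonneg (mul_nonneg (le_max_left _ _) hE0) (invThresholdSum_nonneg hX hx)) hv0
  calc L / 2 ^ k * v ^ (2 * α) ≤ E * (max 0 (1 - 2 * α) + v / s) := by
        rw [hvs, hE, mul_assoc]; gcongr
    _ ≤ _ := by
        simp only [potentialConst, potentialSlope, max_eq_left hjk, Nat.sub_eq_zero_of_le hjk,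
          pow_zero]
        have : E * (max 0 (1 - 2 * α) + v / s) = max 0 (1 - 2 * α) * E * 1 + E / s * v := by ring
        linarith

lemma two_pow_mul_leafEnergy {α : ℝ} (L : ℝ) (hX : 0 < X) (hx : 0 < x)
    (hxα : x ^ (2 * α) = 1 / 2) :
    2 ^ j * leafEnergy α L X x j
      = 2 ^ (1 + 2 * α) * L * (X ^ α * 2 ^ (-(j : ℝ) * α)) ^ 2 := by
  have h2 : (0 : ℝ) ≤ 2 := by norm_num
  have hsq : ∀ {y : ℝ}, 0 ≤ y → y ^ (2 * α) = (y ^ α) ^ 2 := fun hy => by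
    rw [← Real.rpow_mul_natCast hy, mul_comm]; norm_num
  have hj : (2 : ℝ) ^ (-(j : ℝ) * α) = ((2 ^ α) ^ j)⁻¹ := by
    rw [neg_mul, Real.rpow_neg h2, mul_comm, Real.rpow_mul_natCast h2]
  rw [leafEnergy, threshold, zero_add, pow_one, Real.div_rpow (by positivity) (by positivity),
    Real.mul_rpow (by positivity) (by positivity), Real.mul_rpow (by positivity) (by positivity),
    Real.mul_rpow (by positivity) hx.le, hxα, ← Real.rpow_pow_comm hx.le, hxα,
    ← Real.rpow_pow_comm h2, hsq h2, hsq hX.le, hj, Real.rpow_add two_pos, Real.rpow_one, hsq h2]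
  have : (0 : ℝ) < 2 ^ α := by positivity
  rw [one_div_pow]
  field_simp
  ring

end LeafError

section Constants

variable {α : ℝ}

/-- `x ^ (2α) = 1 / 2` makes the leaf error bound `|I| s_k ^ (2α)` independent of the depth. -/
noncomputable def thresholdRatio (α : ℝ) : ℝ := 2 ^ (-(1 / (2 * α)))

noncomputable def c₁ (α : ℝ) : ℝ :=
  (1 - (2 : ℝ) ^ (-(1 / (2 * α) + 1))) / (1 - (2 : ℝ) ^ (-(1 / (2 * α))))

noncomputable def c₂Sq (α : ℝ) : ℝ :=
  (2 : ℝ) ^ (1 + 2 * α) * (1 - (2 : ℝ) ^ (-(1 / (2 * α) + 1))) ^ (1 - 2 * α)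
    / (1 - (2 : ℝ) ^ (-(1 / (2 * α))))

lemma thresholdRatio_pos : 0 < thresholdRatio α := Real.rpow_pos_of_pos two_pos _

lemma thresholdRatio_lt_one (hα : 0 < α) : thresholdRatio α < 1 :=
  Real.rpow_lt_one_of_one_lt_of_neg one_lt_two (by simp only [neg_neg_iff_pos]; positivity)

lemma thresholdRatio_rpow (hα : 0 < α) : thresholdRatio α ^ (2 * α) = 1 / 2 := by
  rw [thresholdRatio, ← Real.rpow_mul two_pos.le, neg_mul, one_div_mul_cancel (by positivity),
    Real.rpow_neg_one, one_div]

lemma thresholdRatio_sq_le (hα : 0 < α) (hα1 : α ≤ 1) : thresholdRatio α ^ 2 ≤ 1 / 2 := by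
  have h : -(1 / (2 * α)) * (2 : ℕ) ≤ -1 := by
    rw [neg_mul, neg_le_neg_iff, Nat.cast_ofNat, div_mul_eq_mul_div, one_mul,
      le_div_iff₀ (by positivity)]
    linarith
  rw [thresholdRatio, ← Real.rpow_mul_natCast two_pos.le]
  calc (2 : ℝ) ^ (-(1 / (2 * α)) * (2 : ℕ)) ≤ 2 ^ (-1 : ℝ) :=
        Real.rpow_le_rpow_of_exponent_le one_le_two h
    _ = 1 / 2 := by rw [Real.rpow_neg_one, one_div]

lemma le_two_rpow {β : ℝ} (hβ : 0 ≤ β) : β ≤ 2 ^ β := by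
  rcases lt_or_ge β 1 with h | h
  · exact h.le.trans (Real.one_le_rpow one_le_two hβ)
  · have := one_add_mul_self_le_rpow_one_add (s := 1) (by norm_num) h
    norm_num at this
    linarith

lemma thresholdRatio_le (hα : 0 < α) : thresholdRatio α ≤ 2 * α := by
  have hβ : 0 < 1 / (2 * α) := by positivity
  calc thresholdRatio α = (2 ^ (1 / (2 * α)))⁻¹ := Real.rpow_neg two_pos.le _
    _ ≤ (1 / (2 * α))⁻¹ := inv_anti₀ hβ (le_two_rpow hβ.le)
    _ = 2 * α := by rw [one_div, inv_inv]

lemma two_rpow_neg_add_one : (2 : ℝ) ^ (-(1 / (2 * α) + 1)) = thresholdRatio α / 2 := by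
  rw [thresholdRatio, neg_add, Real.rpow_add two_pos, Real.rpow_neg_one, ← div_eq_mul_inv]

lemma c₁_eq : c₁ α = (1 - thresholdRatio α / 2) / (1 - thresholdRatio α) := by
  rw [c₁, two_rpow_neg_add_one, thresholdRatio]

lemma c₂Sq_eq : c₂Sq α =
    2 ^ (1 + 2 * α) * (1 - thresholdRatio α / 2) ^ (1 - 2 * α) / (1 - thresholdRatio α) := by
  rw [c₂Sq, two_rpow_neg_add_one, thresholdRatio]

lemma one_lt_c₁ (hα : 0 < α) : 1 < c₁ α := by
  have := thresholdRatio_lt_one hα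
  rw [c₁_eq, one_lt_div (by linarith)]
  linarith [thresholdRatio_pos (α := α)]

lemma c₁_lt (hα : 0 < α) (hα1 : α ≤ 1) : c₁ α < 2.21 := by
  have := thresholdRatio_lt_one hα
  rw [c₁_eq, div_lt_iff₀ (by linarith)]
  nlinarith [thresholdRatio_sq_le hα hα1, thresholdRatio_pos (α := α)]

lemma rpow_one_sub_thresholdRatio_bounds (hα : 0 < α) (hα1 : α ≤ 1) :
    1 - thresholdRatio α / 2 ≤ (1 - thresholdRatio α / 2) ^ (1 - 2 * α) ∧
      (1 - thresholdRatio α / 2) ^ (1 - 2 * α) ≤ (1 - thresholdRatio α / 2)⁻¹ := by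
  have h₀ : 0 < 1 - thresholdRatio α / 2 := by linarith [thresholdRatio_lt_one hα]
  have h₁ : 1 - thresholdRatio α / 2 ≤ 1 := by linarith [thresholdRatio_pos (α := α)]
  constructor
  · simpa using Real.rpow_le_rpow_of_exponent_ge h₀ h₁ (by linarith : 1 - 2 * α ≤ 1)
  · simpa [Real.rpow_neg_one] using
      Real.rpow_le_rpow_of_exponent_ge h₀ h₁ (by linarith : -1 ≤ 1 - 2 * α)

lemma two_lt_c₂Sq (hα : 0 < α) (hα1 : α ≤ 1) : 2 < c₂Sq α := by
  have hx := thresholdRatio_lt_one hα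
  have hq := (rpow_one_sub_thresholdRatio_bounds hα hα1).1
  have hP : 2 < (2 : ℝ) ^ (1 + 2 * α) := by
    simpa using Real.rpow_lt_rpow_of_exponent_lt one_lt_two (by linarith : (1 : ℝ) < 1 + 2 * α)
  rw [c₂Sq_eq, lt_div_iff₀ (by linarith)]
  nlinarith [thresholdRatio_pos (α := α)]

lemma c₂Sq_lt (hα : 0 < α) (hα1 : α ≤ 1) : c₂Sq α < 6.51 ^ 2 := by
  have hx := thresholdRatio_sq_le hα hα1
  have hx0 := thresholdRatio_pos (α := α)
  have hx1 := thresholdRatio_lt_one hα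
  have hq := (rpow_one_sub_thresholdRatio_bounds hα hα1).2
  have hP : (2 : ℝ) ^ (1 + 2 * α) ≤ 8 := by
    calc (2 : ℝ) ^ (1 + 2 * α) ≤ 2 ^ (3 : ℝ) :=
          Real.rpow_le_rpow_of_exponent_le one_le_two (by linarith)
      _ = 8 := by norm_num
  have hq0 : 0 ≤ (1 - thresholdRatio α / 2) ^ (1 - 2 * α) := Real.rpow_nonneg (by linarith) _
  rw [c₂Sq_eq, div_lt_iff₀ (by linarith)]
  calc 2 ^ (1 + 2 * α) * (1 - thresholdRatio α / 2) ^ (1 - 2 * α)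
      ≤ 8 * (1 - thresholdRatio α / 2)⁻¹ := mul_le_mul hP hq hq0 (by norm_num)
    _ < 6.51 ^ 2 * (1 - thresholdRatio α) := by
        rw [← div_eq_mul_inv, div_lt_iff₀ (by linarith)]
        nlinarith

lemma max_mul_add_le_rpow_div {α x : ℝ} (hx0 : 0 < x) (hx1 : x < 1) (hxα : x ≤ 2 * α) :
    max 0 (1 - 2 * α) * ((1 - x / 2) / (1 - x)) + x / 2
      ≤ (1 - x / 2) ^ (1 - 2 * α) / (1 - x) := by
  have hb0 : 0 < 1 - x / 2 := by linarith
  have hb1 : 1 - x / 2 ≤ 1 := by linarith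
  have h1x : 0 < 1 - x := by linarith
  suffices h : max 0 (1 - 2 * α) * (1 - x / 2) + x / 2 * (1 - x) ≤ (1 - x / 2) ^ (1 - 2 * α) by
    rw [mul_div_assoc', div_add' _ _ _ h1x.ne', div_le_div_iff_of_pos_right h1x]
    linarith
  rcases le_or_gt 1 (2 * α) with hα | hα
  · rw [max_eq_left (by linarith)]
    nlinarith [Real.one_le_rpow_of_pos_of_le_one_of_nonpos hb0 hb1 (by linarith : 1 - 2 * α ≤ 0)]
  · rw [max_eq_right (by linarith)]
    have hq : 1 - x / 2 ≤ (1 - x / 2) ^ (1 - 2 * α) := by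
      simpa using Real.rpow_le_rpow_of_exponent_ge hb0 hb1 (by linarith : 1 - 2 * α ≤ 1)
    nlinarith [mul_nonneg (sub_nonneg.2 hxα) hb0.le]

end Constants

section Approximation

variable {α c d a b : ℝ} {r : ℝ} {f : ℝ → ℝ} {k : ℕ}

noncomputable def approxTree (α : ℝ) (f : ℝ → ℝ) (c d : ℝ) (j : ℕ) : BinaryTree Unit :=
  adaptiveTree (varSup (1 / α) f) (cutoff (varSup (1 / α) f c d) (thresholdRatio α) j)
    (3 * j + 1) 0 c d

lemma IsDyadicPiece.bddAbove (h : IsDyadicPiece c d k a b)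
    (hbdd : BddAbove (varSums r f (Ico c d))) : BddAbove (varSums r f (Ico a b)) :=
  hbdd.mono (varSums_mono (Ico_subset_Ico h.1 h.2.1))

lemma IsDyadicPiece.varSup_nonneg (h : IsDyadicPiece c d k a b) (hcd : c < d)
    (hbdd : BddAbove (varSums r f (Ico c d))) : 0 ≤ varSup r f a b :=
  DyadicApprox.varSup_nonneg (h.lt hcd) (h.bddAbove hbdd)

lemma IsDyadicPiece.varSup_add_le (h : IsDyadicPiece c d k a b) (hcd : c < d)
    (hbdd : BddAbove (varSums r f (Ico c d))) :
    varSup r f a ((a + b) / 2) + varSup r f ((a + b) / 2) b ≤ varSup r f a b := by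
  have := h.lt hcd
  exact DyadicApprox.varSup_add_le (by linarith) (by linarith) (h.bddAbove hbdd)

lemma IsDyadicPiece.varSup_le_cutoff {j : ℕ} (h : IsDyadicPiece c d (3 * j + 1) a b)
    (hα : 0 < α) (hα1 : α ≤ 1) (hcd : c < d)
    (hbdd : BddAbove (varSums (1 / α) f (Ico c d))) :
    varSup (1 / α) f a b
      ≤ cutoff (varSup (1 / α) f c d) (thresholdRatio α) j (3 * j + 1) := by
  rw [cutoff, if_neg (by omega)]
  exact (varSup_mono h.1 h.2.1 (h.lt hcd) hbdd).trans (le_threshold_deep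
    (DyadicApprox.varSup_nonneg hcd hbdd) thresholdRatio_pos (thresholdRatio_sq_le hα hα1))

lemma length_approxTree_le (hα : 0 < α) (hα1 : α ≤ 1) (hcd : c < d)
    (hbdd : BddAbove (varSums (1 / α) f (Ico c d))) (hX : 0 < varSup (1 / α) f c d) (j : ℕ) :
    ((dyadicParts (approxTree α f c d j) c d).length : ℝ) ≤ c₁ α * 2 ^ j := by
  set X := varSup (1 / α) f c d
  set x := thresholdRatio α
  have hx : 0 < x := thresholdRatio_pos
  have hx1 : x < 1 := thresholdRatio_lt_one hα
  have hleaf : ∀ k a b, IsDyadicPiece c d k a b → varSup (1 / α) f a b ≤ cutoff X x j k →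
      (((dyadicParts .nil a b).length : ℕ) : ℝ)
        ≤ potentialConst 1 j k + potentialSlope 1 0 X x j k * varSup (1 / α) f a b :=
      fun k _ _ h _ => by
    have := mul_nonneg (potentialSlope_nonneg (j := j) (k := k) zero_le_one le_rfl hX hx)
      (h.varSup_nonneg hcd hbdd)
    have : (1 : ℝ) ≤ potentialConst 1 j k := by
      rw [potentialConst, one_mul]; exact one_le_pow₀ one_le_two
    simp only [dyadicParts, List.length_singleton, Nat.cast_one]
    linarith
  calc ((dyadicParts (approxTree α f c d j) c d).length : ℝ)
      ≤ potentialConst 1 j 0 + potentialSlope 1 0 X x j 0 * X :=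
        le_potential_of_adaptiveTree (fun t a b => ((dyadicParts t a b).length : ℝ)) _ _ _ hcd
          (fun _ _ _ h => h.varSup_add_le hcd hbdd)
          (fun _ _ h => h.varSup_le_cutoff hα hα1 hcd hbdd)
          (fun _ => potentialSlope_nonneg zero_le_one le_rfl hX hx)
          (fun _ _ _ _ _ _ => by simp only [dyadicParts, List.length_append, Nat.cast_add])
          hleaf (fun _ hk _ hv => potential_split_le zero_le_one le_rfl hX hx hx1.le hk hv)
          (3 * j + 1) 0 c d (add_zero _) isDyadicPiece_zero
    _ ≤ 2 ^ j * (1 * ((1 - x / 2) / (1 - x)) + 0 * (x / 2)) :=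
        potential_zero_le zero_le_one hX hx hx1
    _ = c₁ α * 2 ^ j := by rw [c₁_eq]; ring

lemma IsDyadicPiece.setIntegral_sq_sub_left_le_potential {j : ℕ} {X x : ℝ}
    (h : IsDyadicPiece c d k a b) (hα : 0 < α) (hcd : c < d) (hf : Measurable f)
    (hbdd : BddAbove (varSums (1 / α) f (Ico c d))) (hX : 0 < X) (hx : 0 < x)
    (hxα : x ^ (2 * α) = 1 / 2) (hw : varSup (1 / α) f a b ≤ cutoff X x j k) :
    ∫ y in Ico a b, (f y - f a) ^ 2
      ≤ potentialConst (max 0 (1 - 2 * α) * leafEnergy α (d - c) X x j) j k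
        + potentialSlope (max 0 (1 - 2 * α) * leafEnergy α (d - c) X x j)
            (leafEnergy α (d - c) X x j) X x j k * varSup (1 / α) f a b := by
  have hW := h.varSup_nonneg hcd hbdd
  rcases lt_or_ge k j with hkj | hjk
  · rw [cutoff, if_pos hkj] at hw; linarith
  rw [cutoff, if_neg (not_lt.2 hjk)] at hw
  calc ∫ y in Ico a b, (f y - f a) ^ 2 ≤ (b - a) * varSup (1 / α) f a b ^ (2 * α) :=
        setIntegral_sq_sub_left_le hα hf (h.lt hcd).le (h.bddAbove hbdd)
    _ ≤ _ := by
        rw [h.2.2]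
        exact leaf_error_le_potential hα (sub_nonneg.2 hcd.le) hX hx hxα hjk hW hw

lemma sq_error_approxTree_le (hα : 0 < α) (hα1 : α ≤ 1) (hcd : c < d) (hf : Measurable f)
    (hbdd : BddAbove (varSums (1 / α) f (Ico c d))) (hX : 0 < varSup (1 / α) f c d) (j : ℕ) :
    ∫ y in Ico c d, (f y - dyadicStep f (approxTree α f c d j) c d y) ^ 2
      ≤ c₂Sq α * (d - c) * (alphaVar α f (Ico c d) * 2 ^ (-(j : ℝ) * α)) ^ 2 := by
  set X := varSup (1 / α) f c d
  set x := thresholdRatio α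
  set E := leafEnergy α (d - c) X x j
  set m₀ := max 0 (1 - 2 * α)
  have hx : 0 < x := thresholdRatio_pos
  have hx1 : x < 1 := thresholdRatio_lt_one hα
  have hE : 0 ≤ E :=
    mul_nonneg (sub_nonneg.2 hcd.le) (Real.rpow_nonneg (threshold_pos hX hx).le _)
  have hm₀E : 0 ≤ m₀ * E := mul_nonneg (le_max_left _ _) hE
  calc ∫ y in Ico c d, (f y - dyadicStep f (approxTree α f c d j) c d y) ^ 2
      ≤ potentialConst (m₀ * E) j 0 + potentialSlope (m₀ * E) E X x j 0 * X :=
        le_potential_of_adaptiveTree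
          (fun t a b => ∫ y in Ico a b, (f y - dyadicStep f t a b y) ^ 2) _ _ _ hcd
          (fun _ _ _ h => h.varSup_add_le hcd hbdd)
          (fun _ _ h => h.varSup_le_cutoff hα hα1 hcd hbdd)
          (fun _ => potentialSlope_nonneg hm₀E hE hX hx)
          (fun _ _ _ l r h => setIntegral_sq_sub_dyadicStep_node hα hf (h.lt hcd).le
            (h.bddAbove hbdd) l r)
          (fun _ _ _ h hw => h.setIntegral_sq_sub_left_le_potential hα hcd hf hbdd hX hx
            (thresholdRatio_rpow hα) hw)
          (fun _ hk _ hv => potential_split_le hm₀E hE hX hx hx1.le hk hv)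
          (3 * j + 1) 0 c d (add_zero _) isDyadicPiece_zero
    _ ≤ 2 ^ j * (m₀ * E * ((1 - x / 2) / (1 - x)) + E * (x / 2)) :=
        potential_zero_le hm₀E hX hx hx1
    _ = 2 ^ j * E * (m₀ * ((1 - x / 2) / (1 - x)) + x / 2) := by ring
    _ ≤ 2 ^ j * E * ((1 - x / 2) ^ (1 - 2 * α) / (1 - x)) := by
        gcongr; exact max_mul_add_le_rpow_div hx hx1 (thresholdRatio_le hα)
    _ = c₂Sq α * (d - c) * (alphaVar α f (Ico c d) * 2 ^ (-(j : ℝ) * α)) ^ 2 := by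
        have hV : alphaVar α f (Ico c d) = X ^ α := rfl
        rw [two_pow_mul_leafEnergy _ hX hx (thresholdRatio_rpow hα), c₂Sq_eq, hV]
        ring

lemma exists_dyadicParts_sq_error_le (hα : 0 < α) (hα1 : α ≤ 1) (hcd : c < d)
    (hf : Measurable f) (hbdd : BddAbove (varSums (1 / α) f (Ico c d))) (j : ℕ) :
    ∃ t : BinaryTree Unit, ((dyadicParts t c d).length : ℝ) ≤ c₁ α * 2 ^ j ∧
      ∫ y in Ico c d, (f y - dyadicStep f t c d y) ^ 2
        ≤ c₂Sq α * (d - c) * (alphaVar α f (Ico c d) * 2 ^ (-(j : ℝ) * α)) ^ 2 := by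
  rcases (varSup_nonneg hcd hbdd).eq_or_lt with hX | hX
  · refine ⟨.nil, ?_, ?_⟩
    · simp only [dyadicParts, List.length_singleton, Nat.cast_one]
      nlinarith [one_lt_c₁ hα, one_le_pow₀ (n := j) (one_le_two (α := ℝ))]
    · calc ∫ y in Ico c d, (f y - dyadicStep f .nil c d y) ^ 2
          ≤ (d - c) * varSup (1 / α) f c d ^ (2 * α) :=
            setIntegral_sq_sub_left_le hα hf hcd.le hbdd
        _ = 0 := by rw [← hX, Real.zero_rpow (by positivity), mul_zero]
        _ ≤ _ := by
            have := two_lt_c₂Sq hα hα1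
            exact mul_nonneg (mul_nonneg (by linarith) (sub_nonneg.2 hcd.le)) (sq_nonneg _)
  · exact ⟨approxTree α f c d j, length_approxTree_le hα hα1 hcd hbdd hX j,
      sq_error_approxTree_le hα hα1 hcd hf hbdd hX j⟩

end Approximation

end DyadicApprox

open DyadicApprox

/-- Proposition 3: If `f` has bounded `α`-variation `V` on an interval `J` of
length `L`, then for each `j ∈ ℕ` there is a dyadic partition `m` of `J` with
`|m| ≤ c₁(α)·2^j` on which some piecewise-constant function `g` satisfies
`‖f − g‖₂ ≤ c₂(α)·L^{1/2}·V·2^{−jα}`, where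
`c₁(α) = (1 − 2^{−(1/(2α)+1)})/(1 − 2^{−1/(2α)}) ∈ (1, 2.21)` and
`c₂(α) = (2^{1+2α}(1 − 2^{−(1/(2α)+1)})^{1−2α}/(1 − 2^{−1/(2α)}))^{1/2} ∈ (√2, 6.51)`. -/
theorem stmt_12 (α : ℝ) (hα : 0 < α) (hα1 : α ≤ 1) (c d : ℝ) (hcd : c < d)
    (f : ℝ → ℝ) (hf : Measurable f)
    (hbdd : BddAbove (varSums (1 / α) f (Set.Ico c d))) :
    (1 < (1 - (2 : ℝ) ^ (-(1 / (2 * α) + 1))) / (1 - (2 : ℝ) ^ (-(1 / (2 * α)))) ∧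
     (1 - (2 : ℝ) ^ (-(1 / (2 * α) + 1))) / (1 - (2 : ℝ) ^ (-(1 / (2 * α)))) < 2.21) ∧
    (Real.sqrt 2 < Real.sqrt ((2 : ℝ) ^ (1 + 2 * α)
        * (1 - (2 : ℝ) ^ (-(1 / (2 * α) + 1))) ^ (1 - 2 * α)
        / (1 - (2 : ℝ) ^ (-(1 / (2 * α))))) ∧
     Real.sqrt ((2 : ℝ) ^ (1 + 2 * α)
        * (1 - (2 : ℝ) ^ (-(1 / (2 * α) + 1))) ^ (1 - 2 * α)
        / (1 - (2 : ℝ) ^ (-(1 / (2 * α))))) < 6.51) ∧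
    ∀ j : ℕ, ∃ t : BinaryTree Unit,
      ((dyadicParts t c d).length : ℝ)
          ≤ (1 - (2 : ℝ) ^ (-(1 / (2 * α) + 1))) / (1 - (2 : ℝ) ^ (-(1 / (2 * α))))
            * 2 ^ j ∧
      ∃ g : ℝ → ℝ,
        (∀ pq ∈ dyadicParts t c d, ∃ const : ℝ, ∀ y ∈ Set.Ico pq.1 pq.2, g y = const) ∧
        Real.sqrt (∫ y in Set.Ico c d, (f y - g y) ^ 2)
          ≤ Real.sqrt ((2 : ℝ) ^ (1 + 2 * α)
              * (1 - (2 : ℝ) ^ (-(1 / (2 * α) + 1))) ^ (1 - 2 * α)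
              / (1 - (2 : ℝ) ^ (-(1 / (2 * α)))))
            * Real.sqrt (d - c) * alphaVar α f (Set.Ico c d)
            * (2 : ℝ) ^ (-(j : ℝ) * α) := by
  have hc₂ := two_lt_c₂Sq hα hα1
  refine ⟨⟨one_lt_c₁ hα, c₁_lt hα hα1⟩, ⟨Real.sqrt_lt_sqrt zero_le_two hc₂,
    (Real.sqrt_lt' (by norm_num)).2 (c₂Sq_lt hα hα1)⟩, fun j => ?_⟩
  obtain ⟨t, hlen, herr⟩ := exists_dyadicParts_sq_error_le hα hα1 hcd hf hbdd j
  refine ⟨t, hlen, dyadicStep f t c d,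
    fun pq hpq => ⟨f pq.1, dyadicStep_eq_of_mem hcd.le pq hpq⟩, ?_⟩
  have hV : 0 ≤ alphaVar α f (Set.Ico c d) * 2 ^ (-(j : ℝ) * α) :=
    mul_nonneg (Real.rpow_nonneg (varSup_nonneg hcd hbdd) α) (by positivity)
  calc Real.sqrt (∫ y in Set.Ico c d, (f y - dyadicStep f t c d y) ^ 2)
      ≤ Real.sqrt (c₂Sq α * (d - c)
          * (alphaVar α f (Set.Ico c d) * 2 ^ (-(j : ℝ) * α)) ^ 2) :=
        Real.sqrt_le_sqrt herr
    _ = Real.sqrt (c₂Sq α) * Real.sqrt (d - c) * alphaVar α f (Set.Ico c d)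
          * 2 ^ (-(j : ℝ) * α) := by
        rw [Real.sqrt_mul (mul_pos (by linarith) (sub_pos.2 hcd)).le, Real.sqrt_mul (by linarith),
          Real.sqrt_sq hV]
        ring
end

section
/- Let D be a positive integer, g: ℝ → [0,1] supported on [0, 1/D) with ∫₀^{1/D} g² = a > 0. For δ ∈ {0,1}^D define s_δ(x) = a^{−1}[1 + ∑_{j=1}^D (δ_j − 1/2) g_j(x)] on [0,1], where g_j(x) = g(x − (j−1)/D). Then for all δ, δ' ∈ {0,1}^D: (i) ‖s_δ − s_{δ'}‖₂² = a^{−1}·Δ(δ,δ'), and (ii) (1/8)·Δ(δ,δ') ≤ H²(s_δ, s_{δ'}) ≤ (1/7)·Δ(δ,δ'), where Δ is the Hamming distance and H²(s,t) = (1/2)∫(√s − √t)². -/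
open Real MeasureTheory

lemma stmt14_ineq17 {y : ℝ} (h0 : 0 ≤ y) (h1 : y ≤ 1) :
    y / 4 ≤ 2 - 2 * Real.sqrt (1 - y / 4) ∧ 2 - 2 * Real.sqrt (1 - y / 4) ≤ 2 * y / 7 := by
  have hnn : (0:ℝ) ≤ 1 - y / 4 := by linarith
  have hs : Real.sqrt (1 - y / 4) ^ 2 = 1 - y / 4 := Real.sq_sqrt hnn
  have hs0 : 0 ≤ Real.sqrt (1 - y / 4) := Real.sqrt_nonneg _
  have hs1 : Real.sqrt (1 - y / 4) ≤ 1 := by nlinarith [Real.sqrt_nonneg (1 - y/4)]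
  have hs34 : (3:ℝ)/4 ≤ Real.sqrt (1 - y / 4) := by nlinarith
  constructor <;> nlinarith

lemma stmt14_sqid {a u : ℝ} (ha : 0 < a) (h0 : 0 ≤ u) (h1 : u ≤ 1) :
    (Real.sqrt (a⁻¹ * (1 + u / 2)) - Real.sqrt (a⁻¹ * (1 - u / 2))) ^ 2
      = a⁻¹ * (2 - 2 * Real.sqrt (1 - u ^ 2 / 4)) := by
  have hai : (0:ℝ) ≤ a⁻¹ := by positivity
  have hp : (0:ℝ) ≤ 1 + u / 2 := by linarith
  have hq : (0:ℝ) ≤ 1 - u / 2 := by linarith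
  rw [Real.sqrt_mul hai, Real.sqrt_mul hai]
  have hmul : Real.sqrt (1 + u / 2) * Real.sqrt (1 - u / 2) = Real.sqrt (1 - u ^ 2 / 4) := by
    rw [← Real.sqrt_mul hp]
    congr 1; ring
  have h2 : Real.sqrt (1 + u/2) ^ 2 = 1 + u/2 := Real.sq_sqrt hp
  have h3 : Real.sqrt (1 - u/2) ^ 2 = 1 - u/2 := Real.sq_sqrt hq
  have h4 : Real.sqrt a⁻¹ ^ 2 = a⁻¹ := Real.sq_sqrt hai
  have key : (Real.sqrt a⁻¹ * Real.sqrt (1 + u / 2) - Real.sqrt a⁻¹ * Real.sqrt (1 - u / 2)) ^ 2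
      = Real.sqrt a⁻¹ ^ 2 * (Real.sqrt (1 + u/2) ^ 2 + Real.sqrt (1 - u/2) ^ 2
          - 2 * (Real.sqrt (1 + u/2) * Real.sqrt (1 - u/2))) := by ring
  rw [key, h2, h3, h4, hmul]; ring

-- single-index identity for the Hellinger integrand
lemma stmt14_single {a u p q : ℝ} (ha : 0 < a) (h0 : 0 ≤ u) (h1 : u ≤ 1)
    (hp : p = 0 ∨ p = 1) (hq : q = 0 ∨ q = 1) :
    (Real.sqrt (a⁻¹ * (1 + (p - 1/2) * u)) - Real.sqrt (a⁻¹ * (1 + (q - 1/2) * u))) ^ 2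
      = (p - q) ^ 2 * (a⁻¹ * (2 - 2 * Real.sqrt (1 - u ^ 2 / 4))) := by
  rcases hp with hp | hp <;> rcases hq with hq | hq <;> subst hp <;> subst hq
  · simp
  · have h := stmt14_sqid ha h0 h1
    have e1 : (1:ℝ) + (0 - 1/2) * u = 1 - u/2 := by ring
    have e2 : (1:ℝ) + (1 - 1/2) * u = 1 + u/2 := by ring
    rw [e1, e2]
    have : (Real.sqrt (a⁻¹ * (1 - u / 2)) - Real.sqrt (a⁻¹ * (1 + u / 2))) ^ 2
        = (Real.sqrt (a⁻¹ * (1 + u / 2)) - Real.sqrt (a⁻¹ * (1 - u / 2))) ^ 2 := by ring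
    rw [this, h]; ring
  · have h := stmt14_sqid ha h0 h1
    have e1 : (1:ℝ) + (0 - 1/2) * u = 1 - u/2 := by ring
    have e2 : (1:ℝ) + (1 - 1/2) * u = 1 + u/2 := by ring
    rw [e1, e2, h]; ring
  · simp

lemma stmt14_sum_sq {ι : Type*} [Fintype ι] (t : ι → ℝ)
    (h : ∀ j k : ι, j ≠ k → t j = 0 ∨ t k = 0) :
    (∑ j : ι, t j) ^ 2 = ∑ j : ι, (t j) ^ 2 := by
  by_cases hex : ∃ j : ι, t j ≠ 0
  · obtain ⟨j, hj⟩ := hex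
    have hz : ∀ k ∈ Finset.univ, k ≠ j → t k = 0 := fun k _ hkj => (h k j hkj).resolve_right hj
    rw [Finset.sum_eq_single j hz (fun h' => absurd (Finset.mem_univ j) h'),
        Finset.sum_eq_single j (fun k hk hkj => by rw [hz k hk hkj]; ring)
          (fun h' => absurd (Finset.mem_univ j) h')]
  · push_neg at hex
    simp [hex]

-- translation of set integrals
lemma stmt14_trans (D : ℕ) (hD : 0 < D) (f : ℝ → ℝ)
    (hf : ∀ t, t ∉ Set.Ico (0:ℝ) (1/D) → f t = 0) (j : Fin D) :
    ∫ x in Set.Icc (0:ℝ) 1, f (x - (j:ℝ)/D) = ∫ t in Set.Ico (0:ℝ) (1/D), f t := by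
  have hD' : (0:ℝ) < D := by exact_mod_cast hD
  have hj1 : ((j:ℝ) + 1) ≤ D := by exact_mod_cast j.isLt
  have h1 : ∀ x, x ∉ Set.Icc (0:ℝ) 1 → f (x - (j:ℝ)/D) = 0 := by
    intro x hx
    apply hf
    intro hmem
    obtain ⟨hm0, hm1⟩ := hmem
    apply hx
    constructor
    · have : (0:ℝ) ≤ (j:ℝ)/D := by positivity
      linarith
    · have h2 : x < ((j:ℝ) + 1)/D := by rw [add_div]; linarith
      have h3 : ((j:ℝ) + 1)/D ≤ 1 := by
        rw [div_le_one hD']; exact hj1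
      linarith
  rw [setIntegral_eq_integral_of_forall_compl_eq_zero h1,
      integral_sub_right_eq_self (fun t => f t) ((j:ℝ)/D),
      ← setIntegral_eq_integral_of_forall_compl_eq_zero hf]

lemma stmt14_intOn {f : ℝ → ℝ} (hf : Measurable f) {C : ℝ} (hC : ∀ x, |f x| ≤ C)
    {s : Set ℝ} (hs : volume s ≠ ⊤) : IntegrableOn f s :=
  Measure.integrableOn_of_bounded hs hf.aestronglyMeasurable
    (Filter.Eventually.of_forall fun x => by simpa using hC x)

set_option maxHeartbeats 1000000 in
/-- Lemma 2: Let `D ≥ 1`, `g : ℝ → [0,1]` supported on `[0, 1/D)` with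
`∫₀^{1/D} g² = a > 0`. For `δ ∈ {0,1}^D` define
`s_δ(x) = a⁻¹[1 + ∑_j (δ_j − 1/2) g_j(x)]` with `g_j(x) = g(x − (j−1)/D)`. Then
`‖s_δ − s_{δ'}‖₂² = a⁻¹ Δ(δ,δ')` and `Δ(δ,δ')/8 ≤ H²(s_δ, s_{δ'}) ≤ Δ(δ,δ')/7`, where `Δ` is
the Hamming distance and `H²(s,t) = (1/2)∫₀¹(√s − √t)²`. -/
theorem stmt_14 (D : ℕ) (hD : 0 < D) (g : ℝ → ℝ) (hg : Measurable g)
    (hg01 : ∀ x, 0 ≤ g x ∧ g x ≤ 1)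
    (hsupp : ∀ x, x ∉ Set.Ico (0 : ℝ) (1 / D) → g x = 0)
    (a : ℝ) (ha : a = ∫ x in Set.Ico (0 : ℝ) (1 / D), (g x) ^ 2) (hapos : 0 < a)
    (δ δ' : Fin D → ℝ) (hδ : ∀ j, δ j = 0 ∨ δ j = 1) (hδ' : ∀ j, δ' j = 0 ∨ δ' j = 1) :
    (∫ x in Set.Icc (0 : ℝ) 1,
        ((a⁻¹ * (1 + ∑ j : Fin D, (δ j - 1 / 2) * g (x - (j : ℝ) / D)))
          - (a⁻¹ * (1 + ∑ j : Fin D, (δ' j - 1 / 2) * g (x - (j : ℝ) / D)))) ^ 2)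
      = a⁻¹ * ∑ j : Fin D, |δ j - δ' j| ∧
    (1 / 8) * ∑ j : Fin D, |δ j - δ' j|
      ≤ (1 / 2) * ∫ x in Set.Icc (0 : ℝ) 1,
          (Real.sqrt (a⁻¹ * (1 + ∑ j : Fin D, (δ j - 1 / 2) * g (x - (j : ℝ) / D)))
            - Real.sqrt (a⁻¹ * (1 + ∑ j : Fin D, (δ' j - 1 / 2) * g (x - (j : ℝ) / D)))) ^ 2 ∧
    (1 / 2) * ∫ x in Set.Icc (0 : ℝ) 1,
          (Real.sqrt (a⁻¹ * (1 + ∑ j : Fin D, (δ j - 1 / 2) * g (x - (j : ℝ) / D)))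
            - Real.sqrt (a⁻¹ * (1 + ∑ j : Fin D, (δ' j - 1 / 2) * g (x - (j : ℝ) / D)))) ^ 2
      ≤ (1 / 7) * ∑ j : Fin D, |δ j - δ' j| := by
  have hD' : (0:ℝ) < D := by exact_mod_cast hD
  -- disjoint supports
  have hone : ∀ x : ℝ, ∀ j k : Fin D, j ≠ k →
      g (x - (j:ℝ)/D) = 0 ∨ g (x - (k:ℝ)/D) = 0 := by
    intro x j k hjk
    by_contra hcon
    push_neg at hcon
    obtain ⟨hj, hk⟩ := hcon
    have hjm : x - (j:ℝ)/D ∈ Set.Ico (0:ℝ) (1/D) := by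
      by_contra h; exact hj (hsupp _ h)
    have hkm : x - (k:ℝ)/D ∈ Set.Ico (0:ℝ) (1/D) := by
      by_contra h; exact hk (hsupp _ h)
    obtain ⟨hj0, hj1⟩ := hjm
    obtain ⟨hk0, hk1⟩ := hkm
    have h1 : (j:ℝ)/D < (k:ℝ)/D + 1/D := by linarith
    have h2 : (k:ℝ)/D < (j:ℝ)/D + 1/D := by linarith
    rw [← add_div, div_lt_div_iff₀ hD' hD'] at h1 h2
    have hjk1 : (j:ℕ) < (k:ℕ) + 1 := by
      have : (j:ℝ) < (k:ℝ) + 1 := by nlinarith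
      exact_mod_cast this
    have hjk2 : (k:ℕ) < (j:ℕ) + 1 := by
      have : (k:ℝ) < (j:ℝ) + 1 := by nlinarith
      exact_mod_cast this
    exact hjk (Fin.ext (by omega))
  have hIccvol : volume (Set.Icc (0:ℝ) 1) ≠ ⊤ := by
    rw [Real.volume_Icc]; exact ENNReal.ofReal_ne_top
  have hIcovol : volume (Set.Ico (0:ℝ) (1/D)) ≠ ⊤ := by
    rw [Real.volume_Ico]; exact ENNReal.ofReal_ne_top
  have hgj : ∀ j : Fin D, Measurable fun x => g (x - (j:ℝ)/D) :=
    fun j => hg.comp (measurable_id.sub_const _)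
  have habs : ∀ j : Fin D, |δ j - δ' j| = (δ j - δ' j) ^ 2 := by
    intro j
    rcases hδ j with h | h <;> rcases hδ' j with h' | h' <;> rw [h, h'] <;> norm_num
  have hc2 : ∀ j : Fin D, (δ j - δ' j) ^ 2 ≤ 1 := by
    intro j
    rcases hδ j with h | h <;> rcases hδ' j with h' | h' <;> rw [h, h'] <;> norm_num
  -- PART (i)
  have part1 : (∫ x in Set.Icc (0 : ℝ) 1,
        ((a⁻¹ * (1 + ∑ j : Fin D, (δ j - 1 / 2) * g (x - (j : ℝ) / D)))
          - (a⁻¹ * (1 + ∑ j : Fin D, (δ' j - 1 / 2) * g (x - (j : ℝ) / D)))) ^ 2)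
      = a⁻¹ * ∑ j : Fin D, |δ j - δ' j| := by
    have e1 : ∀ x : ℝ,
        ((a⁻¹ * (1 + ∑ j : Fin D, (δ j - 1 / 2) * g (x - (j : ℝ) / D)))
          - (a⁻¹ * (1 + ∑ j : Fin D, (δ' j - 1 / 2) * g (x - (j : ℝ) / D)))) ^ 2
        = ∑ j : Fin D, a⁻¹ ^ 2 * ((δ j - δ' j) ^ 2 * g (x - (j:ℝ)/D) ^ 2) := by
      intro x
      have hd : (a⁻¹ * (1 + ∑ j : Fin D, (δ j - 1 / 2) * g (x - (j : ℝ) / D)))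
          - (a⁻¹ * (1 + ∑ j : Fin D, (δ' j - 1 / 2) * g (x - (j : ℝ) / D)))
          = a⁻¹ * ∑ j : Fin D, (δ j - δ' j) * g (x - (j:ℝ)/D) := by
        rw [mul_add, mul_add, ← sub_sub, add_sub_cancel_left, ← mul_sub,
            ← Finset.sum_sub_distrib]
        congr 1
        exact Finset.sum_congr rfl fun j _ => by ring
      rw [hd, mul_pow, stmt14_sum_sq _ (fun j k hjk => by
        rcases hone x j k hjk with h | h
        · left; rw [h]; ring
        · right; rw [h]; ring), Finset.mul_sum]
      apply Finset.sum_congr rfl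
      intro j _
      ring
    rw [MeasureTheory.integral_congr_ae (Filter.Eventually.of_forall fun x => e1 x)]
    rw [MeasureTheory.integral_finset_sum]
    · have e2 : ∀ j : Fin D,
          (∫ x in Set.Icc (0:ℝ) 1, a⁻¹ ^ 2 * ((δ j - δ' j) ^ 2 * g (x - (j:ℝ)/D) ^ 2))
          = a⁻¹ * |δ j - δ' j| := by
        intro j
        rw [integral_const_mul, integral_const_mul]
        have ht : (∫ x in Set.Icc (0:ℝ) 1, g (x - (j:ℝ)/D) ^ 2)
            = ∫ t in Set.Ico (0:ℝ) (1/D), g t ^ 2 := by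
          exact stmt14_trans D hD (fun t => g t ^ 2)
            (fun t ht => by show g t ^ 2 = 0; rw [hsupp t ht]; ring) j
        rw [ht, ← ha, habs j]
        field_simp
      rw [Finset.sum_congr rfl (fun j _ => e2 j), ← Finset.mul_sum]
    · intro j _
      apply stmt14_intOn
      · exact (((hgj j).pow_const 2).const_mul _).const_mul _
      · intro x
        have h1 := (hg01 (x - (j:ℝ)/D)).1
        have h2 := (hg01 (x - (j:ℝ)/D)).2
        rw [abs_of_nonneg (by positivity)]
        calc a⁻¹ ^ 2 * ((δ j - δ' j) ^ 2 * g (x - (j:ℝ)/D) ^ 2)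
            ≤ a⁻¹ ^ 2 * ((δ j - δ' j) ^ 2 * 1) := by
              apply mul_le_mul_of_nonneg_left _ (by positivity)
              apply mul_le_mul_of_nonneg_left _ (by positivity)
              nlinarith
          _ ≤ a⁻¹ ^ 2 * 1 := by
              apply mul_le_mul_of_nonneg_left _ (by positivity)
              rw [mul_one]; exact hc2 j
          _ = a⁻¹ ^ 2 := mul_one _
      · exact hIccvol
  -- PART (ii)
  -- pointwise identity for the Hellinger integrand
  have e3 : ∀ x : ℝ,
      (Real.sqrt (a⁻¹ * (1 + ∑ j : Fin D, (δ j - 1 / 2) * g (x - (j : ℝ) / D)))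
        - Real.sqrt (a⁻¹ * (1 + ∑ j : Fin D, (δ' j - 1 / 2) * g (x - (j : ℝ) / D)))) ^ 2
      = ∑ j : Fin D, (δ j - δ' j) ^ 2 *
          (a⁻¹ * (2 - 2 * Real.sqrt (1 - g (x - (j:ℝ)/D) ^ 2 / 4))) := by
    intro x
    by_cases hex : ∃ k : Fin D, g (x - (k:ℝ)/D) ≠ 0
    · obtain ⟨k, hk⟩ := hex
      have hz : ∀ j : Fin D, j ≠ k → g (x - (j:ℝ)/D) = 0 :=
        fun j hj => (hone x j k hj).resolve_right hk
      have hsum1 : ∀ (c : Fin D → ℝ), (∑ j : Fin D, (c j - 1/2) * g (x - (j:ℝ)/D))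
          = (c k - 1/2) * g (x - (k:ℝ)/D) := by
        intro c
        exact Finset.sum_eq_single k (fun j _ hj => by rw [hz j hj]; ring)
          (fun h' => absurd (Finset.mem_univ k) h')
      have hsum2 : (∑ j : Fin D, (δ j - δ' j) ^ 2 *
            (a⁻¹ * (2 - 2 * Real.sqrt (1 - g (x - (j:ℝ)/D) ^ 2 / 4))))
          = (δ k - δ' k) ^ 2 * (a⁻¹ * (2 - 2 * Real.sqrt (1 - g (x - (k:ℝ)/D) ^ 2 / 4))) := by
        apply Finset.sum_eq_single k (fun j _ hj => by
          rw [hz j hj]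
          norm_num)
          (fun h' => absurd (Finset.mem_univ k) h')
      rw [hsum1 δ, hsum1 δ', hsum2]
      exact stmt14_single hapos (hg01 _).1 (hg01 _).2 (hδ k) (hδ' k)
    · push_neg at hex
      simp only [hex, mul_zero, Finset.sum_const_zero, add_zero, sub_self, ne_eq,
        zero_pow, zero_div, sub_zero, Real.sqrt_one]
      norm_num
  have hIntF : IntegrableOn (fun t => 2 - 2 * Real.sqrt (1 - g t ^ 2 / 4))
      (Set.Ico (0:ℝ) (1/D)) := by
    apply stmt14_intOn (C := 2)
    · have h1 : Measurable fun t : ℝ => Real.sqrt (1 - g t ^ 2 / 4) :=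
        Real.continuous_sqrt.measurable.comp
          (measurable_const.sub ((hg.pow_const 2).div_const 4))
      exact measurable_const.sub (h1.const_mul 2)
    · intro x
      obtain ⟨hx0, hx1⟩ := hg01 x
      have hy := stmt14_ineq17 (y := g x ^ 2) (by positivity) (by nlinarith)
      rw [abs_le]
      constructor <;> nlinarith [hy.1, hy.2]
    · exact hIcovol
  have hIntG2 : IntegrableOn (fun t => g t ^ 2) (Set.Ico (0:ℝ) (1/D)) := by
    apply stmt14_intOn (C := 1)
    · exact hg.pow_const 2
    · intro x
      obtain ⟨hx0, hx1⟩ := hg01 x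
      rw [abs_of_nonneg (by positivity)]
      nlinarith
    · exact hIcovol
  -- the common integral I with bounds
  set I : ℝ := ∫ t in Set.Ico (0:ℝ) (1/D), (2 - 2 * Real.sqrt (1 - g t ^ 2 / 4)) with hI
  have hIlow : a / 4 ≤ I := by
    have : (∫ t in Set.Ico (0:ℝ) (1/D), g t ^ 2 / 4) ≤ I := by
      apply MeasureTheory.setIntegral_mono_on (hIntG2.div_const 4) hIntF measurableSet_Ico
      intro x _
      obtain ⟨hx0, hx1⟩ := hg01 x
      exact (stmt14_ineq17 (y := g x ^ 2) (by positivity) (by nlinarith)).1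
    rw [MeasureTheory.integral_div, ← ha] at this
    linarith
  have hIhigh : I ≤ 2 * a / 7 := by
    have hmono : I ≤ ∫ t in Set.Ico (0:ℝ) (1/D), (2/7) * g t ^ 2 := by
      apply MeasureTheory.setIntegral_mono_on hIntF (hIntG2.const_mul (2/7)) measurableSet_Ico
      intro x _
      obtain ⟨hx0, hx1⟩ := hg01 x
      have := (stmt14_ineq17 (y := g x ^ 2) (by positivity) (by nlinarith)).2
      linarith
    rw [integral_const_mul, ← ha] at hmono
    linarith
  -- the Hellinger integral equals S * (a⁻¹ * I)
  have hH : (∫ x in Set.Icc (0 : ℝ) 1,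
        (Real.sqrt (a⁻¹ * (1 + ∑ j : Fin D, (δ j - 1 / 2) * g (x - (j : ℝ) / D)))
          - Real.sqrt (a⁻¹ * (1 + ∑ j : Fin D, (δ' j - 1 / 2) * g (x - (j : ℝ) / D)))) ^ 2)
      = (∑ j : Fin D, |δ j - δ' j|) * (a⁻¹ * I) := by
    rw [MeasureTheory.integral_congr_ae (Filter.Eventually.of_forall fun x => e3 x)]
    rw [MeasureTheory.integral_finset_sum]
    · have e4 : ∀ j : Fin D,
          (∫ x in Set.Icc (0:ℝ) 1, (δ j - δ' j) ^ 2 *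
            (a⁻¹ * (2 - 2 * Real.sqrt (1 - g (x - (j:ℝ)/D) ^ 2 / 4))))
          = |δ j - δ' j| * (a⁻¹ * I) := by
        intro j
        rw [integral_const_mul, integral_const_mul]
        have ht : (∫ x in Set.Icc (0:ℝ) 1, (2 - 2 * Real.sqrt (1 - g (x - (j:ℝ)/D) ^ 2 / 4)))
            = I := by
          exact stmt14_trans D hD (fun t => 2 - 2 * Real.sqrt (1 - g t ^ 2 / 4))
            (fun t ht => by show 2 - 2 * Real.sqrt (1 - g t ^ 2 / 4) = 0; rw [hsupp t ht]; norm_num) j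
        rw [ht, habs j]
      rw [Finset.sum_congr rfl (fun j _ => e4 j), ← Finset.sum_mul]
    · intro j _
      have hm : Measurable fun x => (δ j - δ' j) ^ 2 *
          (a⁻¹ * (2 - 2 * Real.sqrt (1 - g (x - (j:ℝ)/D) ^ 2 / 4))) := by
        have h1 : Measurable fun x : ℝ => Real.sqrt (1 - g (x - (j:ℝ)/D) ^ 2 / 4) :=
          Real.continuous_sqrt.measurable.comp
            (measurable_const.sub (((hgj j).pow_const 2).div_const 4))
        exact ((measurable_const.sub (h1.const_mul 2)).const_mul a⁻¹).const_mul _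
      refine stmt14_intOn hm (C := (δ j - δ' j) ^ 2 * (a⁻¹ * 2)) (fun x => ?_) hIccvol
      obtain ⟨hx0, hx1⟩ := hg01 (x - (j:ℝ)/D)
      have hy := stmt14_ineq17 (y := g (x - (j:ℝ)/D) ^ 2) (by positivity) (by nlinarith)
      have hain : (0:ℝ) ≤ a⁻¹ := by positivity
      rw [abs_of_nonneg (mul_nonneg (sq_nonneg _) (mul_nonneg hain
        (by nlinarith [hy.1, sq_nonneg (g (x - (j:ℝ)/D))])))]
      apply mul_le_mul_of_nonneg_left _ (sq_nonneg _)
      apply mul_le_mul_of_nonneg_left _ hain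
      nlinarith [hy.2, sq_nonneg (g (x - (j:ℝ)/D))]
  refine ⟨part1, ?_, ?_⟩
  · rw [hH]
    have hS : (0:ℝ) ≤ ∑ j : Fin D, |δ j - δ' j| := Finset.sum_nonneg fun j _ => abs_nonneg _
    have hain : (0:ℝ) < a⁻¹ := by positivity
    have haa : a⁻¹ * a = 1 := inv_mul_cancel₀ hapos.ne'
    have hu : (1:ℝ)/4 ≤ a⁻¹ * I := by
      have h1 : a⁻¹ * (a/4) ≤ a⁻¹ * I := mul_le_mul_of_nonneg_left hIlow hain.le
      have h2 : a⁻¹ * (a/4) = 1/4 := by field_simp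
      linarith
    have := mul_le_mul_of_nonneg_left hu hS
    linarith
  · rw [hH]
    have hS : (0:ℝ) ≤ ∑ j : Fin D, |δ j - δ' j| := Finset.sum_nonneg fun j _ => abs_nonneg _
    have hain : (0:ℝ) < a⁻¹ := by positivity
    have hu : a⁻¹ * I ≤ 2/7 := by
      have h1 : a⁻¹ * I ≤ a⁻¹ * (2*a/7) := mul_le_mul_of_nonneg_left hIhigh hain.le
      have h2 : a⁻¹ * (2*a/7) = 2/7 := by field_simp
      linarith
    have := mul_le_mul_of_nonneg_left hu hS
    linarith
end
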